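/- arXiv:1401.7514 — 11 statements merged into one kernel-verified Lean document; each statement's English description precedes it below -/
import Mathlib

section
/- Let G be a non-trivial connected simple graph with maximum degree Δ and minimum degree δ. If Δ − δ ≤ 3 and G is not isomorphic to the star K_{1,4} nor to the tree T* on eight vertices obtained by joining the central vertices of two copies of K_{1,3} by an edge, then GA(G) > ABC(G). -/
open SimpleGraph

/-- The first geometric-arithmetic index of a finite simple graph:
`GA(G) = Σ_{uv ∈ E(G)} 2√(dᵤ dᵥ)/(dᵤ + dᵥ)`. -/
noncomputable def GA {V : Type*} [Finite V] (G : SimpleGraph V) : ℝ := by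
  classical
  have : Fintype V := Fintype.ofFinite V
  exact ∑ e ∈ G.edgeFinset,
    Sym2.lift ⟨fun u v =>
      2 * Real.sqrt ((G.degree u : ℝ) * (G.degree v : ℝ)) /
        ((G.degree u : ℝ) + (G.degree v : ℝ)),
      fun u v => by
        dsimp only; rw [mul_comm ((G.degree u : ℝ)), add_comm ((G.degree u : ℝ))]⟩ e

/-- The atom-bond connectivity index of a finite simple graph:
`ABC(G) = Σ_{uv ∈ E(G)} √((dᵤ + dᵥ - 2)/(dᵤ dᵥ))`. -/
noncomputable def ABC {V : Type*} [Finite V] (G : SimpleGraph V) : ℝ := by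
  classical
  have : Fintype V := Fintype.ofFinite V
  exact ∑ e ∈ G.edgeFinset,
    Sym2.lift ⟨fun u v =>
      Real.sqrt (((G.degree u : ℝ) + (G.degree v : ℝ) - 2) /
        ((G.degree u : ℝ) * (G.degree v : ℝ))),
      fun u v => by
        dsimp only; rw [mul_comm ((G.degree u : ℝ)), add_comm ((G.degree u : ℝ))]⟩ e

/-- The degree of a vertex (classical wrapper around `SimpleGraph.degree`). -/
noncomputable def deg {V : Type*} [Finite V] (G : SimpleGraph V) (v : V) : ℕ := by
  classical
  have : Fintype V := Fintype.ofFinite V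
  exact G.degree v

/-- The maximum degree `Δ` of a finite simple graph. -/
noncomputable def maxDeg {V : Type*} [Finite V] (G : SimpleGraph V) : ℕ := by
  classical
  have : Fintype V := Fintype.ofFinite V
  exact G.maxDegree

/-- The minimum degree `δ` of a finite simple graph. -/
noncomputable def minDeg {V : Type*} [Finite V] (G : SimpleGraph V) : ℕ := by
  classical
  have : Fintype V := Fintype.ofFinite V
  exact G.minDegree

/-- The star `K_{1,4}`: the vertex `0` is joined to the four leaves `1,2,3,4`. -/
def starK14 : SimpleGraph (Fin 5) := SimpleGraph.fromRel (fun u _ => u = 0)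

/-- The tree `T*` on eight vertices obtained by joining the central vertices `0` and `4`
of two copies of `K_{1,3}` by an edge. -/
def Tstar : SimpleGraph (Fin 8) :=
  SimpleGraph.fromEdgeSet {s(0,1), s(0,2), s(0,3), s(0,4), s(4,5), s(4,6), s(4,7)}

/-!
`GA - ABC` is the sum over the edges `uv` of `indexGap d_u d_v`, which is positive for
all degrees with `|d_u - d_v| ≤ 3` except `{d_u, d_v} = {1, 4}`, where it lies just above `-1/15`.
If such an edge exists then `δ = 1` and `Δ = 4`, and we discharge: a vertex of degree `4` with
`k` leaf neighbours pays `1/15` on each leaf edge and collects `k / (15 (4 - k))` from each of its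
`4 - k` other edges, so its charges sum to zero. This fails only for `k = 4`, i.e. for `K_{1,4}`.
Every edge then still has a gap larger than the charges at its two ends, except an edge joining
two degree-`4` vertices with three leaves each (charge `2/5 > indexGap 4 4 ≈ 0.388`), and that
configuration is `T*`.
-/

open Finset

noncomputable def indexGap (a b : ℕ) : ℝ :=
  2 * √((a : ℝ) * b) / (a + b) - √(((a : ℝ) + b - 2) / (a * b))

lemma indexGap_comm (a b : ℕ) : indexGap a b = indexGap b a := by
  rw [indexGap, indexGap, mul_comm (a : ℝ), add_comm (a : ℝ)]

lemma indexGap_pos_of_sq_lt {a b : ℕ} (ha : 1 ≤ a) (hb : 1 ≤ b)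
    (h : ((a : ℝ) + b) ^ 2 * (a + b - 2) < 4 * (a * b) ^ 2) : 0 < indexGap a b := by
  have hab : (0 : ℝ) < a * b := by positivity
  have hga : 0 < 2 * √((a : ℝ) * b) / (a + b) := by positivity
  rw [indexGap, sub_pos, Real.sqrt_lt' hga, div_pow, mul_pow, Real.sq_sqrt hab.le,
    div_lt_div_iff₀ hab (by positivity)]
  nlinarith

lemma indexGap_pos {a b : ℕ} (ha : 1 ≤ a) (hb : 1 ≤ b) (hba : b ≤ a + 3) (hab : a ≤ b + 3)
    (h14 : ¬(a = 1 ∧ b = 4)) (h41 : ¬(a = 4 ∧ b = 1)) : 0 < indexGap a b := by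
  apply indexGap_pos_of_sq_lt ha hb
  rcases Nat.lt_or_ge a 2 with ha2 | ha2
  · obtain rfl : a = 1 := by omega
    obtain rfl | rfl | rfl : b = 1 ∨ b = 2 ∨ b = 3 := by omega
    all_goals norm_num
  rcases Nat.lt_or_ge b 2 with hb2 | hb2
  · obtain rfl : b = 1 := by omega
    obtain rfl | rfl : a = 2 ∨ a = 3 := by omega
    all_goals norm_num
  have ha2 : (2 : ℝ) ≤ a := by exact_mod_cast ha2
  have hb2 : (2 : ℝ) ≤ b := by exact_mod_cast hb2
  have hba : (b : ℝ) ≤ a + 3 := by exact_mod_cast hba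
  have hab : (a : ℝ) ≤ b + 3 := by exact_mod_cast hab
  nlinarith [mul_nonneg (sub_nonneg.mpr ha2) (sub_nonneg.mpr hb2),
    mul_nonneg (mul_nonneg (sub_nonneg.mpr ha2) (sub_nonneg.mpr hb2)) (sub_nonneg.mpr ha2),
    mul_nonneg (sub_nonneg.mpr hba) (sub_nonneg.mpr ha2),
    mul_nonneg (sub_nonneg.mpr hab) (sub_nonneg.mpr hb2),
    sq_nonneg ((a : ℝ) - b), sq_nonneg ((a : ℝ) + b - 4)]

lemma lt_indexGap {a b : ℕ} (ha : 1 ≤ a) {p q c : ℝ} (hpab : p ^ 2 ≤ a * b)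
    (hq : 0 < q) (hqab : ((a : ℝ) + b - 2) / (a * b) < q ^ 2) (hc : c ≤ 2 * p / (a + b) - q) :
    c < indexGap a b := by
  have hsum : (0 : ℝ) < a + b := by positivity
  have hga : 2 * p / (a + b) ≤ 2 * √((a : ℝ) * b) / (a + b) := by
    gcongr
    exact Real.le_sqrt_of_sq_le hpab
  have habc : √(((a : ℝ) + b - 2) / (a * b)) < q := (Real.sqrt_lt' hq).mpr hqab
  rw [indexGap]
  linarith

lemma neg_one_fifteenth_lt_indexGap_four_one : -1 / 15 < indexGap 4 1 :=
  lt_indexGap (p := 2) (q := 13 / 15) (by norm_num) (by norm_num) (by norm_num)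
    (by norm_num) (by norm_num)

lemma one_fifth_lt_indexGap_four_two : 1 / 5 < indexGap 4 2 :=
  lt_indexGap (p := 2.8) (q := 0.71) (by norm_num) (by norm_num) (by norm_num)
    (by norm_num) (by norm_num)

lemma one_fifth_lt_indexGap_four_three : 1 / 5 < indexGap 4 3 :=
  lt_indexGap (p := 3.4) (q := 0.65) (by norm_num) (by norm_num) (by norm_num)
    (by norm_num) (by norm_num)

lemma four_fifteenths_lt_indexGap_four_four : 4 / 15 < indexGap 4 4 :=
  lt_indexGap (p := 4) (q := 0.62) (by norm_num) (by norm_num) (by norm_num)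
    (by norm_num) (by norm_num)

noncomputable def leafShare (k : ℕ) : ℝ := k / (15 * (4 - k))

/-- The charge that a vertex of degree `a` with `k` leaf neighbours places on its edge to a
vertex of degree `b`. -/
noncomputable def leafDischarge (a b k : ℕ) : ℝ :=
  if a = 4 then if b = 1 then -1 / 15 else leafShare k else 0

lemma leafShare_le {k : ℕ} (hk : k ≤ 3) : leafShare k ≤ 1 / 5 := by
  interval_cases k <;> norm_num [leafShare]

lemma leafShare_add_le {k l : ℕ} (hk : k ≤ 3) (hl : l ≤ 3) (hkl : k + l ≤ 5) :
    leafShare k + leafShare l ≤ 4 / 15 := by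
  interval_cases k <;> interval_cases l <;> first | omega | norm_num [leafShare]

lemma leafDischarge_four_lt_indexGap {b k : ℕ} (hb : 1 ≤ b) (hb3 : b ≤ 3) (hk : k ≤ 3) :
    leafDischarge 4 b k < indexGap 4 b := by
  have := leafShare_le hk
  interval_cases b <;> norm_num [leafDischarge]
  · linarith [neg_one_fifteenth_lt_indexGap_four_one]
  · linarith [one_fifth_lt_indexGap_four_two]
  · linarith [one_fifth_lt_indexGap_four_three]

lemma leafDischarge_add_lt_indexGap {a b k l : ℕ} (ha : 1 ≤ a) (ha4 : a ≤ 4) (hb : 1 ≤ b)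
    (hb4 : b ≤ 4) (hk : k ≤ 3) (hl : l ≤ 3) (hkl : a = 4 → b = 4 → k + l ≤ 5) :
    leafDischarge a b k + leafDischarge b a l < indexGap a b := by
  have hzero : ∀ {c d m : ℕ}, c ≠ 4 → leafDischarge c d m = 0 := fun hc => if_neg hc
  by_cases ha' : a = 4 <;> by_cases hb' : b = 4
  · subst ha' hb'
    have := leafShare_add_le hk hl (hkl rfl rfl)
    norm_num [leafDischarge]
    linarith [four_fifteenths_lt_indexGap_four_four]
  · subst ha'
    rw [hzero hb', add_zero]
    exact leafDischarge_four_lt_indexGap hb (by omega) hk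
  · subst hb'
    rw [hzero ha', zero_add, indexGap_comm]
    exact leafDischarge_four_lt_indexGap ha (by omega) hl
  · rw [hzero ha', hzero hb', add_zero]
    exact indexGap_pos ha hb (by omega) (by omega) (by omega) (by omega)

lemma GA_sub_ABC_eq_sum {V : Type*} [Fintype V] (G : SimpleGraph V) [DecidableRel G.Adj] :
    GA G - ABC G = ∑ e ∈ G.edgeFinset, Sym2.lift
      ⟨fun u v => indexGap (G.degree u) (G.degree v), fun _ _ => indexGap_comm _ _⟩ e := by
  classical
  unfold GA ABC
  rw [← sum_sub_distrib]
  congr! 1 with e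
  · ext; simp
  · induction e with
    | _ u v => simp only [Sym2.lift_mk, indexGap]; congr!

lemma degree_le_degree_add {V : Type*} [Fintype V] (G : SimpleGraph V) [DecidableRel G.Adj]
    {d : ℕ} (h : maxDeg G - minDeg G ≤ d) (u v : V) : G.degree u ≤ G.degree v + d := by
  have h' : G.maxDegree - G.minDegree ≤ d := by
    unfold maxDeg minDeg at h
    convert h using 2 <;> congr!
  have := G.degree_le_maxDegree u
  have := G.minDegree_le_degree v
  omega

namespace SimpleGraph

variable {V W : Type*} {G : SimpleGraph V}

lemma Connected.mem_of_forall_adj_mem (hG : G.Connected) {s : Set V}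
    (hs : ∀ u v, G.Adj u v → u ∈ s → v ∈ s) {u : V} (hu : u ∈ s) (v : V) : v ∈ s := by
  obtain ⟨p⟩ := hG u v
  induction p with
  | nil => exact hu
  | cons h _ ih => exact ih (hs _ _ h hu)

lemma Connected.nonempty_iso_of_neighborSet_subset_image {H : SimpleGraph W} [Nonempty W]
    (hG : G.Connected) (g : W → V) (hg : Function.Injective g)
    (hhom : ∀ i j, H.Adj i j → G.Adj (g i) (g j))
    (hnbr : ∀ i, G.neighborSet (g i) ⊆ g '' H.neighborSet i) : Nonempty (G ≃g H) := by
  have hsurj : Function.Surjective g := by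
    have hclosed : ∀ u v, G.Adj u v → u ∈ Set.range g → v ∈ Set.range g := by
      rintro _ v huv ⟨i, rfl⟩
      obtain ⟨j, -, rfl⟩ := hnbr i huv
      exact ⟨j, rfl⟩
    exact hG.mem_of_forall_adj_mem hclosed (Set.mem_range_self (Classical.arbitrary W))
  refine ⟨(⟨Equiv.ofBijective g ⟨hg, hsurj⟩, fun {i j} => ⟨fun h => ?_, hhom i j⟩⟩ :
    H ≃g G).symm⟩
  obtain ⟨k, hk, hkj⟩ := hnbr i h
  rwa [← hg hkj]

variable [Fintype V] [DecidableRel G.Adj]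

theorem sum_edgeFinset_eq_sum_sum_neighborFinset {M : Type*} [AddCommMonoid M]
    (f : Sym2 V → M) (φ : V → V → M)
    (h : ∀ u v, G.Adj u v → f s(u, v) = φ u v + φ v u) :
    ∑ e ∈ G.edgeFinset, f e = ∑ u, ∑ v ∈ G.neighborFinset u, φ u v := by
  classical
  calc ∑ e ∈ G.edgeFinset, f e = ∑ d : G.Dart, φ d.fst d.snd := by
        rw [← sum_fiberwise_of_maps_to (g := Dart.edge)
          fun d _ => G.mem_edgeFinset.mpr d.edge_mem]
        refine sum_congr rfl fun e he => ?_
        induction e with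
        | _ u v =>
          let d : G.Dart := ⟨(u, v), G.mem_edgeFinset.mp he⟩
          rw [show s(u, v) = d.edge from rfl, d.edge_fiber, sum_pair d.symm_ne.symm]
          exact h u v d.adj
    _ = ∑ p : V × V with G.Adj p.1 p.2, φ p.1 p.2 := by
        rw [← sum_image (f := fun p : V × V => φ p.1 p.2) (g := Dart.toProd)
          fun _ _ _ _ h => Dart.toProd_injective h]
        congr 1
        ext p
        simpa using ⟨fun ⟨d, hd⟩ => hd ▸ d.adj, fun hp => ⟨⟨p, hp⟩, rfl⟩⟩
    _ = ∑ u, ∑ v ∈ G.neighborFinset u, φ u v := by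
        rw [sum_filter, ← univ_product_univ, sum_product]
        simp [neighborFinset_eq_filter, sum_filter]

theorem sum_edgeFinset_pos_of_discharge (f : Sym2 V → ℝ) (φ : V → V → ℝ)
    (hφ : ∀ u, ∑ v ∈ G.neighborFinset u, φ u v = 0)
    (hf : ∀ u v, G.Adj u v → φ u v + φ v u < f s(u, v)) (hne : G.edgeFinset.Nonempty) :
    0 < ∑ e ∈ G.edgeFinset, f e := by
  let g : Sym2 V → ℝ := Sym2.lift ⟨fun u v => φ u v + φ v u, fun _ _ => add_comm _ _⟩
  have hg : ∑ e ∈ G.edgeFinset, g e = 0 := by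
    rw [sum_edgeFinset_eq_sum_sum_neighborFinset g φ fun _ _ _ => rfl]
    exact sum_eq_zero fun u _ => hφ u
  rw [← hg]
  refine sum_lt_sum_of_nonempty hne fun e he => ?_
  induction e with
  | _ u v => exact hf u v (G.mem_edgeFinset.mp he)

variable (G) in
def leafNeighborFinset (v : V) : Finset V := {w ∈ G.neighborFinset v | G.degree w = 1}

lemma leafNeighborFinset_subset {u : V} : G.leafNeighborFinset u ⊆ G.neighborFinset u :=
  filter_subset _ _

lemma adj_of_mem_leafNeighborFinset {u v : V} (hv : v ∈ G.leafNeighborFinset u) : G.Adj u v :=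
  (G.mem_neighborFinset u v).mp (mem_filter.mp hv).1

lemma neighborFinset_eq_singleton_of_mem_leafNeighborFinset {u v : V}
    (hv : v ∈ G.leafNeighborFinset u) : G.neighborFinset v = {u} := by
  obtain ⟨w, hw⟩ := card_eq_one.mp (mem_filter.mp hv).2
  have hu : u ∈ G.neighborFinset v :=
    (G.mem_neighborFinset v u).mpr (adj_of_mem_leafNeighborFinset hv).symm
  rw [hw, mem_singleton] at hu
  rw [hw, hu]

lemma disjoint_leafNeighborFinset {u w : V} (huw : u ≠ w) :
    Disjoint (G.leafNeighborFinset u) (G.leafNeighborFinset w) :=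
  Finset.disjoint_left.mpr fun _ hu hw => huw <| Finset.singleton_injective <|
    (neighborFinset_eq_singleton_of_mem_leafNeighborFinset hu).symm.trans
      (neighborFinset_eq_singleton_of_mem_leafNeighborFinset hw)

lemma neighborFinset_eq_insert_leafNeighborFinset [DecidableEq V] {u w : V}
    (hu : G.degree u = #(G.leafNeighborFinset u) + 1) (huw : G.Adj u w) (hw : G.degree w ≠ 1) :
    G.neighborFinset u = insert w (G.leafNeighborFinset u) := by
  have hwL : w ∉ G.leafNeighborFinset u := fun h => hw (mem_filter.mp h).2
  refine (eq_of_subset_of_card_le (insert_subset ((G.mem_neighborFinset u w).mpr huw)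
    leafNeighborFinset_subset) ?_).symm
  rw [card_insert_of_notMem hwL, card_neighborFinset_eq_degree, hu]

lemma nonempty_iso_starK14 (hG : G.Connected) {u : V} (hu : G.degree u = 4)
    (hL : #(G.leafNeighborFinset u) = 4) : Nonempty (G ≃g starK14) := by
  classical
  have hN : G.neighborFinset u = G.leafNeighborFinset u := (eq_of_subset_of_card_le
    leafNeighborFinset_subset (by rw [hL, card_neighborFinset_eq_degree, hu])).symm
  have hNa : ∀ x ∈ G.leafNeighborFinset u, G.neighborFinset x = {u} :=
    fun _ => neighborFinset_eq_singleton_of_mem_leafNeighborFinset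
  have hAa : ∀ x ∈ G.leafNeighborFinset u, G.Adj u x := fun _ => adj_of_mem_leafNeighborFinset
  obtain ⟨a, b, c, d, hab, hac, had, hbc, hbd, hcd, ha⟩ := card_eq_four.mp hL
  rw [ha] at hN hNa hAa
  simp only [mem_insert, mem_singleton, forall_eq_or_imp, forall_eq] at hNa hAa
  refine hG.nonempty_iso_of_neighborSet_subset_image ![u, a, b, c, d] ?_ ?_ ?_
  · have := hAa.1.ne; have := hAa.2.1.ne; have := hAa.2.2.1.ne; have := hAa.2.2.2.ne
    intro i j h
    clear hN hNa ha
    fin_cases i <;> fin_cases j <;> simp at h ⊢ <;> grind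
  · intro i j hij
    simp only [starK14, fromRel_adj] at hij
    fin_cases i <;> fin_cases j <;> simp_all [adj_comm]
  · intro i
    fin_cases i <;>
      simp [← coe_neighborFinset, hN, hNa, Set.insert_subset_iff, starK14, Fin.exists_fin_succ]

lemma nonempty_iso_Tstar (hG : G.Connected) {u w : V} (huw : G.Adj u w) (hu : G.degree u = 4)
    (hw : G.degree w = 4) (hLu : #(G.leafNeighborFinset u) = 3)
    (hLw : #(G.leafNeighborFinset w) = 3) : Nonempty (G ≃g Tstar) := by
  classical
  have hNu := neighborFinset_eq_insert_leafNeighborFinset (by omega) huw (by omega)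
  have hNw := neighborFinset_eq_insert_leafNeighborFinset (by omega) huw.symm (by omega)
  have hdisj := disjoint_leafNeighborFinset (G := G) huw.ne
  have hNa : ∀ x ∈ G.leafNeighborFinset u, G.neighborFinset x = {u} :=
    fun _ => neighborFinset_eq_singleton_of_mem_leafNeighborFinset
  have hNb : ∀ x ∈ G.leafNeighborFinset w, G.neighborFinset x = {w} :=
    fun _ => neighborFinset_eq_singleton_of_mem_leafNeighborFinset
  have hAa : ∀ x ∈ G.leafNeighborFinset u, G.Adj u x := fun _ => adj_of_mem_leafNeighborFinset
  have hAb : ∀ x ∈ G.leafNeighborFinset w, G.Adj w x := fun _ => adj_of_mem_leafNeighborFinset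
  have hwLu : w ∉ G.leafNeighborFinset u := fun h => by simp [leafNeighborFinset, hw] at h
  have huLw : u ∉ G.leafNeighborFinset w := fun h => by simp [leafNeighborFinset, hu] at h
  obtain ⟨a₁, a₂, a₃, h₁₂, h₁₃, h₂₃, ha⟩ := card_eq_three.mp hLu
  obtain ⟨b₁, b₂, b₃, k₁₂, k₁₃, k₂₃, hb⟩ := card_eq_three.mp hLw
  rw [ha] at hNu hNa hAa hwLu hdisj
  rw [hb] at hNw hNb hAb huLw hdisj
  simp only [mem_insert, mem_singleton, forall_eq_or_imp, forall_eq] at hNa hNb hAa hAb hwLu huLw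
  simp only [disjoint_insert_left, disjoint_insert_right, disjoint_singleton_left, mem_insert,
    mem_singleton] at hdisj
  refine hG.nonempty_iso_of_neighborSet_subset_image
    ![u, a₁, a₂, a₃, w, b₁, b₂, b₃] ?_ ?_ ?_
  · have := huw.ne; have := hAa.1.ne; have := hAa.2.1.ne; have := hAa.2.2.ne
    have := hAb.1.ne; have := hAb.2.1.ne; have := hAb.2.2.ne
    intro i j h
    clear hNu hNw hNa hNb ha hb
    fin_cases i <;> fin_cases j <;> simp at h ⊢ <;> grind
  · intro i j hij
    simp only [Tstar, fromEdgeSet_adj, Set.mem_insert_iff, Set.mem_singleton_iff, Sym2.eq_iff]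
      at hij
    obtain ⟨h, -⟩ := hij
    rcases h with h | h | h | h | h | h | h <;> rcases h with ⟨rfl, rfl⟩ | ⟨rfl, rfl⟩ <;>
      simp [huw, hAa, hAb, huw.symm, hAa.1.symm, hAa.2.1.symm, hAa.2.2.symm, hAb.1.symm,
        hAb.2.1.symm, hAb.2.2.symm]
  · intro i
    fin_cases i <;> simp [← coe_neighborFinset, hNu, hNw, hNa, hNb, Set.insert_subset_iff, Tstar,
      Fin.exists_fin_succ]

lemma card_leafNeighborFinset_le_three (hG : G.Connected) (hK : IsEmpty (G ≃g starK14)) {u : V}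
    (hu : G.degree u ≤ 4) : #(G.leafNeighborFinset u) ≤ 3 := by
  by_contra! h
  have hle := card_le_card (leafNeighborFinset_subset (G := G) (u := u))
  rw [card_neighborFinset_eq_degree] at hle
  exact hK.false (nonempty_iso_starK14 hG (u := u) (by omega) (by omega)).some

lemma card_leafNeighborFinset_add_le_five (hG : G.Connected) (hT : IsEmpty (G ≃g Tstar))
    {u w : V} (huw : G.Adj u w) (hu : G.degree u = 4) (hw : G.degree w = 4)
    (hku : #(G.leafNeighborFinset u) ≤ 3) (hkw : #(G.leafNeighborFinset w) ≤ 3) :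
    #(G.leafNeighborFinset u) + #(G.leafNeighborFinset w) ≤ 5 := by
  by_contra! h
  exact hT.false (nonempty_iso_Tstar hG huw hu hw (by omega) (by omega)).some

lemma sum_leafDischarge_eq_zero (u : V) (hu : #(G.leafNeighborFinset u) ≤ 3) :
    ∑ v ∈ G.neighborFinset u,
      leafDischarge (G.degree u) (G.degree v) #(G.leafNeighborFinset u) = 0 := by
  by_cases h4 : G.degree u = 4
  · set k := #(G.leafNeighborFinset u)
    have hrest : #{v ∈ G.neighborFinset u | ¬G.degree v = 1} = 4 - k := by
      have := card_filter_add_card_filter_not (s := G.neighborFinset u) (G.degree · = 1)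
      rw [card_neighborFinset_eq_degree, h4] at this
      exact Nat.eq_sub_of_add_eq' this
    have hleaf : ∀ v ∈ G.leafNeighborFinset u, leafDischarge 4 (G.degree v) k = -1 / 15 :=
      fun v hv => by simp [leafDischarge, (mem_filter.mp hv).2]
    have hother : ∀ v ∈ {v ∈ G.neighborFinset u | ¬G.degree v = 1},
        leafDischarge 4 (G.degree v) k = leafShare k :=
      fun v hv => by simp [leafDischarge, (mem_filter.mp hv).2]
    rw [h4, ← sum_filter_add_sum_filter_not _ (G.degree · = 1)]
    change ∑ v ∈ G.leafNeighborFinset u, _ + _ = 0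
    rw [sum_congr rfl hleaf, sum_congr rfl hother, sum_const, sum_const, hrest, nsmul_eq_mul,
      nsmul_eq_mul, Nat.cast_sub (by omega : k ≤ 4), leafShare]
    have : (4 : ℝ) - k ≠ 0 := by
      have : (k : ℝ) ≤ 3 := by exact_mod_cast hu
      linarith
    field_simp
    push_cast
    ring
  · exact sum_eq_zero fun v _ => if_neg h4

end SimpleGraph

/-- Das–Trinajstić. If `G` is a non-trivial connected graph with
`Δ - δ ≤ 3` which is isomorphic neither to `K_{1,4}` nor to `T*`, then `GA(G) > ABC(G)`. -/
theorem stmt_0 {V : Type*} [Fintype V] (G : SimpleGraph V)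
    (hconn : G.Connected) (hnontriv : 2 ≤ Fintype.card V)
    (hdeg : maxDeg G - minDeg G ≤ 3)
    (hK14 : IsEmpty (G ≃g starK14)) (hTstar : IsEmpty (G ≃g Tstar)) :
    ABC G < GA G := by
  classical
  have : Nontrivial V := Fintype.one_lt_card_iff_nontrivial.mp hnontriv
  have hpos (v : V) : 1 ≤ G.degree v := hconn.preconnected.degree_pos_of_nontrivial v
  have hspread := degree_le_degree_add G hdeg
  rw [← sub_pos, GA_sub_ABC_eq_sum]
  by_cases hleaf : ∃ u v, G.Adj u v ∧ G.degree u = 4 ∧ G.degree v = 1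
  · obtain ⟨u₁, v₁, h₁, -, hv₁⟩ := hleaf
    have hle (v : V) : G.degree v ≤ 4 := by have := hspread v v₁; omega
    have hk (v : V) := card_leafNeighborFinset_le_three hconn hK14 (hle v)
    refine sum_edgeFinset_pos_of_discharge _
      (fun u v => leafDischarge (G.degree u) (G.degree v) #(G.leafNeighborFinset u))
      (fun u => sum_leafDischarge_eq_zero u (hk u)) (fun u v huv => ?_)
      ⟨s(u₁, v₁), G.mem_edgeFinset.mpr h₁⟩
    exact leafDischarge_add_lt_indexGap (hpos u) (hle u) (hpos v) (hle v) (hk u) (hk v)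
      fun hu hv => card_leafNeighborFinset_add_le_five hconn hTstar huv hu hv (hk u) (hk v)
  · push Not at hleaf
    obtain ⟨v₀⟩ := hconn.nonempty
    obtain ⟨w₀, h₀⟩ := (G.degree_pos_iff_exists_adj v₀).mp (hpos v₀)
    refine sum_pos (fun e he => ?_) ⟨s(v₀, w₀), G.mem_edgeFinset.mpr h₀⟩
    induction e with
    | _ u v =>
      have huv := G.mem_edgeFinset.mp he
      exact indexGap_pos (hpos u) (hpos v) (hspread v u) (hspread u v)
        (fun h => hleaf v u huv.symm h.2 h.1) (fun h => hleaf u v huv h.1 h.2)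
end

section
/- Let M be a connected simple graph with at least 5 vertices and let G be the line graph of M. Then no two pendant edges of G are adjacent; that is, no vertex of G is adjacent to two distinct vertices of degree one. -/
/-!
Suppose the edge `u` of `M` is adjacent in `L(M)` to two distinct pendant vertices `v` and `w`
of `L(M)`, i.e. `u` is the only edge of `M` meeting `v` and the only one meeting `w`.
Then `u` joins an endpoint of `v` to an endpoint of `w`, and no edge of `M` leaves the at most
four endpoints of `v` and `w`. Since `M` is connected, these endpoints are all of its vertices.
-/

open SimpleGraph

namespace SimpleGraph

variable {V : Type*}

theorem existsUnique_adj_of_deg_eq_one [Finite V] {G : SimpleGraph V} {v : V}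
    (h : deg G v = 1) : ∃! w, G.Adj v w := by
  classical
  let := Fintype.ofFinite V
  exact degree_eq_one_iff_existsUnique_adj.mp h

theorem Preconnected.eq_univ_of_adj_closed {G : SimpleGraph V} (hG : G.Preconnected)
    {S : Set V} (hS : ∀ x y, x ∈ S → G.Adj x y → y ∈ S) {x : V} (hx : x ∈ S) :
    S = Set.univ := by
  refine Set.eq_univ_of_forall fun y => ?_
  obtain ⟨p⟩ := hG x y
  induction p with
  | nil => exact hx
  | cons hadj _ ih => exact ih (hS _ _ hx hadj)

variable {M : SimpleGraph V} {u v w : M.edgeSet}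

theorem lineGraph_adj_of_mem {e f : M.edgeSet} {x : V} (hef : e ≠ f)
    (he : x ∈ (e : Sym2 V)) (hf : x ∈ (f : Sym2 V)) : M.lineGraph.Adj e f :=
  lineGraph_adj_iff_exists.mpr ⟨hef, x, he, hf⟩

theorem mem_or_mem_of_lineGraph_leaf (huv : M.lineGraph.Adj u v)
    (huw : M.lineGraph.Adj u w) (hvw : v ≠ w)
    (hv : ∀ e, M.lineGraph.Adj v e → e = u) {x : V} (hx : x ∈ (u : Sym2 V)) :
    x ∈ (v : Sym2 V) ∨ x ∈ (w : Sym2 V) := by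
  obtain ⟨-, p, hpu, hpv⟩ := lineGraph_adj_iff_exists.mp huv
  obtain ⟨hne_uw, r, hru, hrw⟩ := lineGraph_adj_iff_exists.mp huw
  have hpr : p ≠ r := by
    rintro rfl
    exact hne_uw (hv w (lineGraph_adj_of_mem hvw hpv hrw)).symm
  rw [(Sym2.mem_and_mem_iff hpr).mp ⟨hpu, hru⟩, Sym2.mem_iff] at hx
  rcases hx with rfl | rfl
  exacts [Or.inl hpv, Or.inr hrw]

theorem Preconnected.mem_or_mem_of_lineGraph_leaves (hM : M.Preconnected)
    (huv : M.lineGraph.Adj u v) (huw : M.lineGraph.Adj u w) (hvw : v ≠ w)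
    (hv : ∀ e, M.lineGraph.Adj v e → e = u) (hw : ∀ e, M.lineGraph.Adj w e → e = u) (x : V) :
    x ∈ (v : Sym2 V) ∨ x ∈ (w : Sym2 V) := by
  have hu {y : V} (hy : y ∈ (u : Sym2 V)) := mem_or_mem_of_lineGraph_leaf huv huw hvw hv hy
  have hstay {f : M.edgeSet} (hf : ∀ e, M.lineGraph.Adj f e → e = u) {y z : V}
      (hy : y ∈ (f : Sym2 V)) (hyz : M.Adj y z) : z ∈ (f : Sym2 V) ∨ z ∈ (u : Sym2 V) := by
    set e : M.edgeSet := ⟨s(y, z), hyz⟩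
    by_cases hfe : f = e
    · exact Or.inl (hfe ▸ Sym2.mem_mk_right y z)
    · exact Or.inr (hf e (lineGraph_adj_of_mem hfe hy (Sym2.mem_mk_left y z)) ▸
        Sym2.mem_mk_right y z)
  have hclosed : ∀ y z, y ∈ {y | y ∈ (v : Sym2 V) ∨ y ∈ (w : Sym2 V)} → M.Adj y z →
      z ∈ {y | y ∈ (v : Sym2 V) ∨ y ∈ (w : Sym2 V)} := by
    rintro y z (hy | hy) hyz
    · exact (hstay hv hy hyz).elim Or.inl hu
    · exact (hstay hw hy hyz).elim Or.inr hu
  obtain ⟨-, p, -, hpv⟩ := lineGraph_adj_iff_exists.mp huv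
  exact Set.eq_univ_iff_forall.mp (hM.eq_univ_of_adj_closed hclosed (Or.inl hpv)) x

end SimpleGraph

theorem Sym2.card_le_four_of_forall_mem_or_mem {V : Type*} [Fintype V] {v w : Sym2 V}
    (h : ∀ x, x ∈ v ∨ x ∈ w) : Fintype.card V ≤ 4 := by
  classical
  induction v using Sym2.ind with | _ a b =>
  induction w using Sym2.ind with | _ c d =>
  have hsub : (Finset.univ : Finset V) ⊆ {a, b, c, d} := fun x _ => by
    have := h x
    simp only [Sym2.mem_iff] at this
    simp only [Finset.mem_insert, Finset.mem_singleton]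
    tauto
  exact (Finset.card_le_card hsub).trans Finset.card_le_four

/-- If `M` is a connected graph with at least `5` vertices and `G` is its
line graph, then no two pendant edges of `G` are adjacent: no vertex of `G` is adjacent to
two distinct vertices of degree one. -/
theorem stmt_2 {V : Type*} [Fintype V] (M : SimpleGraph V)
    (hconn : M.Connected) (hn : 5 ≤ Fintype.card V) :
    ∀ u v w : M.edgeSet, M.lineGraph.Adj u v → M.lineGraph.Adj u w → v ≠ w →
      ¬(deg M.lineGraph v = 1 ∧ deg M.lineGraph w = 1) := by
  rintro u v w huv huw hvw ⟨hv, hw⟩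
  have hv_leaf : ∀ e, M.lineGraph.Adj v e → e = u := fun e he =>
    (existsUnique_adj_of_deg_eq_one hv).unique he huv.symm
  have hw_leaf : ∀ e, M.lineGraph.Adj w e → e = u := fun e he =>
    (existsUnique_adj_of_deg_eq_one hw).unique he huw.symm
  have hcard := Sym2.card_le_four_of_forall_mem_or_mem
    (hconn.preconnected.mem_or_mem_of_lineGraph_leaves huv huw hvw hv_leaf hw_leaf)
  omega
end

section
/- Let k ≥ 2 be a real number and define f(x,y) = (x+y)²x² − (x + y/2)²(2x + y − 2). Then f(x,y) > 0 for all real numbers x, y with k ≤ x ≤ k + (2k−1)² and 0 ≤ y ≤ (2k−1)². -/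
/-!
With `s = 2x - 1`, the polynomial splits as
`f(x,y) = x²((x-1)² + 1) + y(2x+1)/4 + y(s² - y)(y + s)/4`.
The first term is positive for `x ≠ 0` and the other two are nonnegative whenever
`x ≥ 1/2` and `0 ≤ y ≤ s²`; for `x ≥ k ≥ 2` the range `y ≤ (2k-1)²` lies inside `y ≤ s²`.
-/

theorem add_sq_mul_sq_sub_eq (x y : ℝ) :
    (x + y)^2 * x^2 - (x + y/2)^2 * (2*x + y - 2) =
      x^2 * ((x - 1)^2 + 1) + y * (2*x + 1) / 4
        + y * ((2*x - 1)^2 - y) * (y + (2*x - 1)) / 4 := by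
  ring

theorem add_sq_mul_sq_sub_pos {x y : ℝ} (hx : 1/2 ≤ x) (hy₀ : 0 ≤ y)
    (hy : y ≤ (2*x - 1)^2) :
    0 < (x + y)^2 * x^2 - (x + y/2)^2 * (2*x + y - 2) := by
  rw [add_sq_mul_sq_sub_eq]
  have hs : 0 ≤ 2*x - 1 := by linarith
  have h₁ : 0 < x^2 * ((x - 1)^2 + 1) := by
    have : 0 < x := by linarith
    positivity
  have h₂ : 0 ≤ y * (2*x + 1) / 4 := by
    have : 0 ≤ 2*x + 1 := by linarith
    positivity
  have h₃ : 0 ≤ y * ((2*x - 1)^2 - y) * (y + (2*x - 1)) / 4 := by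
    have : 0 ≤ (2*x - 1)^2 - y := sub_nonneg.mpr hy
    have : 0 ≤ y + (2*x - 1) := by linarith
    positivity
  linarith

theorem stmt_3_general (k x y : ℝ) (hk : 2 ≤ k)
    (hx₁ : k ≤ x)
    (hy₁ : 0 ≤ y) (hy₂ : y ≤ (2*k - 1)^2) :
    0 < (x + y)^2 * x^2 - (x + y/2)^2 * (2*x + y - 2) := by
  have hsq : (2*k - 1)^2 ≤ (2*x - 1)^2 := by
    gcongr
    · linarith
  exact add_sq_mul_sq_sub_pos (by linarith) hy₁ (hy₂.trans hsq)

/-- For a real number `k ≥ 2`, the polynomial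
`f(x,y) = (x+y)²x² − (x + y/2)²(2x + y − 2)` is positive for all
`k ≤ x ≤ k + (2k−1)²` and `0 ≤ y ≤ (2k−1)²`. -/
theorem stmt_3 (k x y : ℝ) (hk : 2 ≤ k)
    (hx₁ : k ≤ x) (hx₂ : x ≤ k + (2*k - 1)^2)
    (hy₁ : 0 ≤ y) (hy₂ : y ≤ (2*k - 1)^2) :
    0 < (x + y)^2 * x^2 - (x + y/2)^2 * (2*x + y - 2) :=
  stmt_3_general k x y hk hx₁ hy₁ hy₂
end

section
/- Let a and b be integers with a, b ≥ 2 and |a − b| ≤ (2·min(a,b) − 1)². Then a²b² > (1/4)(a+b)²(a+b−2); equivalently, 2√(ab)/(a+b) > √((a+b−2)/(ab)). -/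
/-!
Put `d = b - a ≥ 0` for `a ≤ b` and `m = (2a - 1)²`. Expanding in `d`,
`4a²b² - (a+b)²(a+b-2) = (m - d)·d·(d + 2a - 1) + (2a + 1)·d + 4a²((a - 1)² + 1)`,
and the hypothesis `d ≤ m` makes every summand nonnegative, the last one positive.
The square-root form follows by squaring both (positive) sides.
-/

section OrderedRing

variable {R : Type*} [CommRing R] [LinearOrder R] [IsStrictOrderedRing R]

theorem add_sq_mul_add_sub_two_lt_of_le_of_sub_le {a b : R} (ha : 1 ≤ 2 * a) (hab : a ≤ b)
    (h : b - a ≤ (2 * a - 1) ^ 2) :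
    (a + b) ^ 2 * (a + b - 2) < 4 * (a ^ 2 * b ^ 2) := by
  set d := b - a with hd
  have hd_nonneg : 0 ≤ d := sub_nonneg.mpr hab
  have ha_pos : 0 < a := by linarith
  have key : 4 * (a ^ 2 * b ^ 2) - (a + b) ^ 2 * (a + b - 2) =
      ((2 * a - 1) ^ 2 - d) * d * (d + 2 * a - 1) + (2 * a + 1) * d
        + 4 * a ^ 2 * ((a - 1) ^ 2 + 1) := by
    rw [hd]; ring
  have h₁ : 0 ≤ ((2 * a - 1) ^ 2 - d) * d * (d + 2 * a - 1) :=
    mul_nonneg (mul_nonneg (sub_nonneg.mpr h) hd_nonneg) (by linarith)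
  have h₂ : 0 ≤ (2 * a + 1) * d := mul_nonneg (by linarith) hd_nonneg
  have h₃ : 0 < 4 * a ^ 2 * ((a - 1) ^ 2 + 1) := by positivity
  linarith

theorem add_sq_mul_add_sub_two_lt {a b : R} (h₀ : 1 ≤ 2 * min a b)
    (h : |a - b| ≤ (2 * min a b - 1) ^ 2) :
    (a + b) ^ 2 * (a + b - 2) < 4 * (a ^ 2 * b ^ 2) := by
  rcases le_total a b with hab | hba
  · rw [min_eq_left hab] at h₀ h
    rw [abs_sub_comm, abs_of_nonneg (sub_nonneg.mpr hab)] at h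
    exact add_sq_mul_add_sub_two_lt_of_le_of_sub_le h₀ hab h
  · rw [min_eq_right hba] at h₀ h
    rw [abs_of_nonneg (sub_nonneg.mpr hba)] at h
    have := add_sq_mul_add_sub_two_lt_of_le_of_sub_le h₀ hba h
    rwa [add_comm b a, mul_comm (b ^ 2)] at this

end OrderedRing

theorem Real.sqrt_add_sub_two_div_mul_lt {x y : ℝ} (hx : 0 < x) (hy : 0 < y)
    (h : (x + y) ^ 2 * (x + y - 2) < 4 * (x ^ 2 * y ^ 2)) :
    √((x + y - 2) / (x * y)) < 2 * √(x * y) / (x + y) := by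
  have hxy : 0 < x * y := mul_pos hx hy
  have hsum : 0 < x + y := add_pos hx hy
  have hsq : (2 * √(x * y) / (x + y)) ^ 2 = 4 * (x * y) / (x + y) ^ 2 := by
    rw [div_pow, mul_pow, Real.sq_sqrt hxy.le]
    norm_num
  rw [Real.sqrt_lt' (by positivity), hsq, div_lt_div_iff₀ hxy (by positivity)]
  linarith

/-- For integers `a, b ≥ 2` with `|a − b| ≤ (2·min(a,b) − 1)²` one has
`a²b² > (1/4)(a+b)²(a+b−2)`; equivalently, `2√(ab)/(a+b) > √((a+b−2)/(ab))`. -/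
theorem stmt_4 (a b : ℤ) (ha : 2 ≤ a) (hb : 2 ≤ b)
    (h : |a - b| ≤ (2 * min a b - 1)^2) :
    (1/4 : ℝ) * ((a : ℝ) + b)^2 * ((a : ℝ) + b - 2) < (a : ℝ)^2 * (b : ℝ)^2 ∧
    Real.sqrt (((a : ℝ) + b - 2) / ((a : ℝ) * b)) <
      2 * Real.sqrt ((a : ℝ) * b) / ((a : ℝ) + b) := by
  have ha' : (2 : ℝ) ≤ a := by exact_mod_cast ha
  have hb' : (2 : ℝ) ≤ b := by exact_mod_cast hb
  have hmin : (1 : ℝ) ≤ 2 * min (a : ℝ) b := by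
    have := le_min ha' hb'
    linarith
  have h' : |(a : ℝ) - b| ≤ (2 * min (a : ℝ) b - 1) ^ 2 := by exact_mod_cast h
  have key := add_sq_mul_add_sub_two_lt hmin h'
  exact ⟨by linarith, Real.sqrt_add_sub_two_div_mul_lt (by linarith) (by linarith) key⟩
end

section
/- Let G be a connected simple graph with maximum degree Δ and minimum degree δ ≥ 2. If Δ − δ ≤ (2δ − 1)², then GA(G) > ABC(G). -/
/-!
The inequality holds edge by edge. Squaring, the ABC weight of an edge with end degrees `x ≤ y`
is below its GA weight iff `4(xy)² - (x+y-2)(x+y)² > 0`. For `x ≥ δ ≥ 2` this gap is increasing in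
`x`, so it suffices to take `x = δ`; writing `y = δ + t` with `0 ≤ t ≤ (2δ-1)²`, the gap is
`4δ²((δ-1)²+1) + (2δ+1)t + (2δ-1)t((2δ-1)²-t) + t²((2δ-1)²-t) > 0`.
Since `δ ≥ 2`, the graph has an edge, so the inequality of the sums is strict.
-/

open SimpleGraph

section

variable {V : Type*} [Fintype V] (G : SimpleGraph V) [DecidableRel G.Adj]

lemma deg_eq_degree (v : V) : deg G v = G.degree v := by
  unfold deg
  convert rfl

lemma minDeg_eq_minDegree : minDeg G = G.minDegree := by
  unfold minDeg
  convert rfl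

lemma maxDeg_eq_maxDegree : maxDeg G = G.maxDegree := by
  unfold maxDeg
  convert rfl

end

lemma SimpleGraph.ne_bot_of_minDegree_pos {V : Type*} [Fintype V] {G : SimpleGraph V}
    [DecidableRel G.Adj] (h : 0 < G.minDegree) : G ≠ ⊥ := by
  rw [Ne, ← maxDegree_eq_zero_iff]
  exact (h.trans_le G.minDegree_le_maxDegree).ne'

lemma abc_lt_ga_of_forall_adj {V : Type*} [Finite V] {G : SimpleGraph V} (hG : G ≠ ⊥)
    (h : ∀ u v, G.Adj u v →
      √(((deg G u : ℝ) + deg G v - 2) / (deg G u * deg G v)) <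
        2 * √((deg G u : ℝ) * deg G v) / (deg G u + deg G v)) :
    ABC G < GA G := by
  classical
  have : Fintype V := Fintype.ofFinite V
  obtain ⟨e, he⟩ := edgeSet_nonempty.2 hG
  unfold ABC GA
  refine Finset.sum_lt_sum_of_nonempty ⟨e, by simpa using he⟩ fun e he => ?_
  induction e with
  | _ u v => exact h u v (by simpa using he)

def abcGaGap (x y : ℝ) : ℝ := 4 * (x * y) ^ 2 - (x + y - 2) * (x + y) ^ 2

lemma abcGaGap_comm (x y : ℝ) : abcGaGap x y = abcGaGap y x := by
  unfold abcGaGap; ring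

lemma abcGaGap_le_abcGaGap {d a b : ℝ} (hd : 2 ≤ d) (hda : d ≤ a) (hab : a ≤ b) :
    abcGaGap d b ≤ abcGaGap a b := by
  have hfactor : abcGaGap a b - abcGaGap d b = (a - d) *
      (4 * b ^ 2 * (a + d) - (a ^ 2 + a * d + d ^ 2 + (3 * b - 2) * (a + d) + 3 * b ^ 2 - 4 * b)) := by
    unfold abcGaGap; ring
  have hsecond : 0 ≤ 4 * b ^ 2 * (a + d) -
      (a ^ 2 + a * d + d ^ 2 + (3 * b - 2) * (a + d) + 3 * b ^ 2 - 4 * b) := by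
    nlinarith
  linarith [mul_nonneg (sub_nonneg.2 hda) hsecond]

lemma abcGaGap_pos_left {d b : ℝ} (hd : 2 ≤ d) (hdb : d ≤ b) (hb : b ≤ d + (2 * d - 1) ^ 2) :
    0 < abcGaGap d b := by
  obtain ⟨t, rfl⟩ : ∃ t, b = d + t := ⟨b - d, by ring⟩
  have ht : 0 ≤ t := by linarith
  have hs : 0 ≤ (2 * d - 1) ^ 2 - t := by linarith
  have hexpand : abcGaGap d (d + t) = 4 * d ^ 2 * ((d - 1) ^ 2 + 1) + (2 * d + 1) * t +
      (2 * d - 1) * t * ((2 * d - 1) ^ 2 - t) + t ^ 2 * ((2 * d - 1) ^ 2 - t) := by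
    unfold abcGaGap; ring
  rw [hexpand]
  have : 0 ≤ (2 * d - 1) * t * ((2 * d - 1) ^ 2 - t) :=
    mul_nonneg (mul_nonneg (by linarith) ht) hs
  have : 0 ≤ t ^ 2 * ((2 * d - 1) ^ 2 - t) := mul_nonneg (sq_nonneg t) hs
  have : 0 ≤ (2 * d + 1) * t := mul_nonneg (by linarith) ht
  have : 0 < 4 * d ^ 2 * ((d - 1) ^ 2 + 1) := by positivity
  linarith

lemma abcGaGap_pos {d x y : ℝ} (hd : 2 ≤ d) (hx : x ∈ Set.Icc d (d + (2 * d - 1) ^ 2))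
    (hy : y ∈ Set.Icc d (d + (2 * d - 1) ^ 2)) : 0 < abcGaGap x y := by
  wlog hxy : x ≤ y generalizing x y
  · rw [abcGaGap_comm]
    exact this hy hx (le_of_not_ge hxy)
  exact (abcGaGap_pos_left hd hy.1 hy.2).trans_le (abcGaGap_le_abcGaGap hd hx.1 hxy)

lemma sqrt_abc_lt_ga_of_abcGaGap_pos {x y : ℝ} (hx : 0 < x) (hy : 0 < y) (h : 0 < abcGaGap x y) :
    √((x + y - 2) / (x * y)) < 2 * √(x * y) / (x + y) := by
  rw [Real.sqrt_lt' (by positivity), div_pow, mul_pow, Real.sq_sqrt (by positivity),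
    div_lt_div_iff₀ (by positivity) (by positivity)]
  unfold abcGaGap at h
  linarith

theorem stmt_5_general {V : Type*} [Fintype V] (G : SimpleGraph V)
    (hδ : 2 ≤ minDeg G)
    (hdeg : maxDeg G - minDeg G ≤ (2 * minDeg G - 1)^2) :
    ABC G < GA G := by
  classical
  rw [minDeg_eq_minDegree] at hδ hdeg
  rw [maxDeg_eq_maxDegree] at hdeg
  set δ := G.minDegree
  have hδ' : (2 : ℝ) ≤ δ := by exact_mod_cast hδ
  have hΔ : (G.maxDegree : ℝ) ≤ δ + (2 * δ - 1) ^ 2 := by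
    have hΔℕ : G.maxDegree ≤ δ + (2 * δ - 1) ^ 2 := by omega
    rw [← Nat.cast_le (α := ℝ)] at hΔℕ
    push_cast [Nat.cast_sub (show 1 ≤ 2 * δ by omega)] at hΔℕ
    exact hΔℕ
  have hdeg_mem (v : V) : (deg G v : ℝ) ∈ Set.Icc (δ : ℝ) (δ + (2 * δ - 1) ^ 2) := by
    rw [deg_eq_degree]
    exact ⟨mod_cast G.minDegree_le_degree v, (Nat.cast_le.2 (G.degree_le_maxDegree v)).trans hΔ⟩
  refine abc_lt_ga_of_forall_adj (ne_bot_of_minDegree_pos (by omega)) fun u v _ => ?_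
  exact sqrt_abc_lt_ga_of_abcGaGap_pos (by linarith [(hdeg_mem u).1]) (by linarith [(hdeg_mem v).1])
    (abcGaGap_pos hδ' (hdeg_mem u) (hdeg_mem v))

/-- If `G` is a connected graph with minimum degree `δ ≥ 2` and
`Δ − δ ≤ (2δ − 1)²`, then `GA(G) > ABC(G)`. -/
theorem stmt_5 {V : Type*} [Fintype V] (G : SimpleGraph V)
    (hconn : G.Connected) (hδ : 2 ≤ minDeg G)
    (hdeg : maxDeg G - minDeg G ≤ (2 * minDeg G - 1)^2) :
    ABC G < GA G :=
  stmt_5_general G hδ hdeg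
end

section
/- For every integer δ ≥ 2, the complete bipartite graph K_{r,s} with r = δ and s = (2δ−1)² + δ + 1 satisfies GA(K_{r,s}) < ABC(K_{r,s}); explicitly, 2[δ((2δ−1)² + δ + 1)]^{3/2} / ((2δ−1)² + 2δ + 1) < √(δ((2δ−1)² + 2δ − 1)((2δ−1)² + δ + 1)). In particular, the hypothesis Δ − δ ≤ (2δ−1)² cannot be weakened to Δ − δ ≤ (2δ−1)² + 1 in the theorem asserting GA(G) > ABC(G) for connected graphs with minimum degree δ ≥ 2. -/
/-! On `K_{r,s}` every edge joins a vertex of degree `s` to one of degree `r`, so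
`GA = 2 (rs)^{3/2} / (r + s)` and `ABC = √(rs (r + s - 2))`. Comparing squares, `GA < ABC` as
soon as `4 (rs)² < (r + s)² (r + s - 2)`, and for `r = δ`, `s = (2δ - 1)² + δ + 1` the difference
of the two sides is `4δ (3δ² (δ - 2) + 4δ - 2) > 0`. -/

open SimpleGraph

namespace SimpleGraph

variable {α β : Type*}

theorem neighborSet_completeBipartiteGraph_inl (a : α) :
    (completeBipartiteGraph α β).neighborSet (.inl a) = Set.range .inr := by
  ext (_ | _) <;> simp

theorem neighborSet_completeBipartiteGraph_inr (b : β) :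
    (completeBipartiteGraph α β).neighborSet (.inr b) = Set.range .inl := by
  ext (_ | _) <;> simp

theorem degree_completeBipartiteGraph_inl [Fintype β] (a : α)
    [Fintype ((completeBipartiteGraph α β).neighborSet (.inl a))] :
    (completeBipartiteGraph α β).degree (.inl a) = Fintype.card β := by
  rw [← card_neighborSet_eq_degree, Fintype.card_eq_nat_card,
    neighborSet_completeBipartiteGraph_inl, Nat.card_range_of_injective Sum.inr_injective,
    Nat.card_eq_fintype_card]

theorem degree_completeBipartiteGraph_inr [Fintype α] (b : β)
    [Fintype ((completeBipartiteGraph α β).neighborSet (.inr b))] :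
    (completeBipartiteGraph α β).degree (.inr b) = Fintype.card α := by
  rw [← card_neighborSet_eq_degree, Fintype.card_eq_nat_card,
    neighborSet_completeBipartiteGraph_inr, Nat.card_range_of_injective Sum.inl_injective,
    Nat.card_eq_fintype_card]

theorem sum_edgeFinset_completeBipartiteGraph {M : Type*} [AddCommMonoid M] [Fintype α]
    [Fintype β] [Fintype (completeBipartiteGraph α β).edgeSet] (f : Sym2 (α ⊕ β) → M) :
    ∑ e ∈ (completeBipartiteGraph α β).edgeFinset, f e =
      ∑ p : α × β, f s(.inl p.1, .inr p.2) := by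
  symm
  refine Finset.sum_bij (fun p _ => s(.inl p.1, .inr p.2)) (fun p _ => ?_) ?_ ?_ (fun _ _ => rfl)
  · simp
  · rintro ⟨a, b⟩ - ⟨a', b'⟩ -
    simp
  · intro e he
    rw [mem_edgeFinset, edgeSet_completeBipartiteGraph] at he
    obtain ⟨p, rfl⟩ := he
    exact ⟨p, Finset.mem_univ p, rfl⟩

end SimpleGraph

theorem Real.rpow_three_halves {x : ℝ} (hx : 0 ≤ x) : x ^ (3 / 2 : ℝ) = x * √x := by
  rw [show (3 / 2 : ℝ) = 1 + 1 / 2 by norm_num, Real.rpow_add' hx (by norm_num), Real.rpow_one,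
    Real.sqrt_eq_rpow]

variable {α β : Type*} [Fintype α] [Fintype β]

theorem GA_completeBipartiteGraph :
    GA (completeBipartiteGraph α β) =
      2 * ((Fintype.card α : ℝ) * Fintype.card β) ^ (3 / 2 : ℝ) /
        (Fintype.card α + Fintype.card β) := by
  classical
  simp only [GA, sum_edgeFinset_completeBipartiteGraph, Sym2.lift_mk,
    degree_completeBipartiteGraph_inl, degree_completeBipartiteGraph_inr, Finset.sum_const,
    Finset.card_univ, Fintype.card_prod, nsmul_eq_mul, Nat.cast_mul]
  rw [Real.rpow_three_halves (by positivity), mul_comm (Fintype.card β : ℝ),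
    add_comm (Fintype.card β : ℝ)]
  ring

theorem ABC_completeBipartiteGraph :
    ABC (completeBipartiteGraph α β) =
      √((Fintype.card α : ℝ) * Fintype.card β * (Fintype.card α + Fintype.card β - 2)) := by
  classical
  simp only [ABC, sum_edgeFinset_completeBipartiteGraph, Sym2.lift_mk,
    degree_completeBipartiteGraph_inl, degree_completeBipartiteGraph_inr, Finset.sum_const,
    Finset.card_univ, Fintype.card_prod, nsmul_eq_mul, Nat.cast_mul]
  set r : ℝ := (Fintype.card α : ℝ)
  set s : ℝ := (Fintype.card β : ℝ)
  rcases eq_or_ne (r * s) 0 with h | h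
  · simp [h]
  · calc r * s * √((s + r - 2) / (s * r)) = √((r * s) ^ 2 * ((s + r - 2) / (s * r))) := by
          rw [Real.sqrt_mul (sq_nonneg _), Real.sqrt_sq (by positivity)]
      _ = √(r * s * (r + s - 2)) := by
          congr 1
          field_simp
          ring

theorem two_mul_rpow_div_lt_sqrt {p q : ℝ} (hp : 0 < p) (hq : 0 < q)
    (h : 4 * p ^ 2 < q ^ 2 * (q - 2)) : 2 * p ^ (3 / 2 : ℝ) / q < √(p * (q - 2)) := by
  rw [Real.rpow_three_halves hp.le, Real.lt_sqrt (by positivity), div_pow,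
    div_lt_iff₀ (by positivity)]
  calc (2 * (p * √p)) ^ 2 = p * (4 * p ^ 2) := by
        rw [mul_pow, mul_pow, Real.sq_sqrt hp.le]
        ring
    _ < p * (q ^ 2 * (q - 2)) := by gcongr
    _ = p * (q - 2) * q ^ 2 := by ring

theorem four_mul_sq_mul_lt_sq_add_mul_add_sub_two {x : ℝ} (hx : 2 ≤ x) :
    4 * (x * ((2 * x - 1) ^ 2 + x + 1)) ^ 2 <
      (x + ((2 * x - 1) ^ 2 + x + 1)) ^ 2 * (x + ((2 * x - 1) ^ 2 + x + 1) - 2) := by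
  have hcubic : 0 ≤ x * (3 * x ^ 2 * (x - 2)) := by positivity
  have hquad : 0 < x * (2 * x - 1) := mul_pos (by linarith) (by linarith)
  linear_combination 4 * hcubic + 8 * hquad

/-- For every integer `δ ≥ 2`, the complete bipartite graph `K_{r,s}` with
`r = δ` and `s = (2δ−1)² + δ + 1` satisfies `GA(K_{r,s}) < ABC(K_{r,s})`; explicitly,
`2[δ((2δ−1)² + δ + 1)]^{3/2} / ((2δ−1)² + 2δ + 1) < √(δ((2δ−1)² + 2δ − 1)((2δ−1)² + δ + 1))`. -/
theorem stmt_6 (δ : ℕ) (hδ : 2 ≤ δ) :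
    GA (completeBipartiteGraph (Fin δ) (Fin ((2*δ - 1)^2 + δ + 1))) <
      ABC (completeBipartiteGraph (Fin δ) (Fin ((2*δ - 1)^2 + δ + 1))) ∧
    2 * ((δ : ℝ) * ((2*(δ : ℝ) - 1)^2 + δ + 1)) ^ ((3 : ℝ)/2) /
        ((2*(δ : ℝ) - 1)^2 + 2*δ + 1) <
      Real.sqrt ((δ : ℝ) * ((2*(δ : ℝ) - 1)^2 + 2*δ - 1) * ((2*(δ : ℝ) - 1)^2 + δ + 1)) := by
  have hδ' : (2 : ℝ) ≤ δ := by exact_mod_cast hδ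
  have hs : (((2 * δ - 1) ^ 2 + δ + 1 : ℕ) : ℝ) = (2 * (δ : ℝ) - 1) ^ 2 + δ + 1 := by
    push_cast [Nat.cast_sub (by omega : 1 ≤ 2 * δ)]
    ring
  have key : 2 * ((δ : ℝ) * ((2 * δ - 1) ^ 2 + δ + 1)) ^ (3 / 2 : ℝ) /
      (δ + ((2 * δ - 1) ^ 2 + δ + 1)) <
        √(δ * ((2 * δ - 1) ^ 2 + δ + 1) * (δ + ((2 * δ - 1) ^ 2 + δ + 1) - 2)) :=
    two_mul_rpow_div_lt_sqrt (by positivity) (by positivity)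
      (four_mul_sq_mul_lt_sq_add_mul_add_sub_two hδ')
  constructor
  · simpa only [GA_completeBipartiteGraph, ABC_completeBipartiteGraph, Fintype.card_fin, hs]
      using key
  · convert key using 2 <;> ring
end

section
/- Let G be a connected simple graph with minimum degree δ ≥ 2 such that for every edge uv of G one has |d_u − d_v| ≤ (2k − 1)² where k = min(d_u, d_v). Then GA(G) > ABC(G). -/
/-!
Both indices are sums over the edges, so it suffices to compare the two terms of each edge.
For degrees `a, b > 0`, squaring shows that the ABC term is smaller than the GA term exactly when
`(a + b - 2)(a + b)² < 4a²b²`, a polynomial inequality that holds once `2 ≤ a ≤ b ≤ a + (2a - 1)²`.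
A connected graph is nonempty, so `δ ≥ 2` gives it an edge and the inequality between the sums is strict.
-/

open SimpleGraph

-- With `t = b - a`, the cubic term `t ^ 3` of the left side is absorbed by `t ^ 3 ≤ (2a - 1)² t²`.
theorem add_sub_two_mul_add_sq_lt_of_le (a b : ℝ) (ha : 2 ≤ a) (hab : a ≤ b)
    (hb : b ≤ a + (2 * a - 1) ^ 2) :
    (a + b - 2) * (a + b) ^ 2 < 4 * a ^ 2 * b ^ 2 := by
  have ht : 0 ≤ b - a := sub_nonneg.2 hab
  nlinarith [mul_nonneg (mul_nonneg ht ht) (by linarith : 0 ≤ a + (2 * a - 1) ^ 2 - b),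
    mul_nonneg ht (sub_nonneg.2 ha), mul_nonneg (mul_nonneg ht ht) (sub_nonneg.2 ha)]

theorem add_sub_two_mul_add_sq_lt (a b : ℝ) (ha : 2 ≤ a) (hb : 2 ≤ b)
    (h : |a - b| ≤ (2 * min a b - 1) ^ 2) :
    (a + b - 2) * (a + b) ^ 2 < 4 * a ^ 2 * b ^ 2 := by
  wlog hab : a ≤ b generalizing a b
  · have := this b a hb ha (by rwa [abs_sub_comm, min_comm]) (le_of_not_ge hab)
    linarith
  rw [min_eq_left hab, abs_sub_comm, abs_of_nonneg (sub_nonneg.2 hab)] at h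
  exact add_sub_two_mul_add_sq_lt_of_le a b ha hab (by linarith)

theorem sqrt_abc_lt_ga_of_mul_lt (a b : ℝ) (ha : 0 < a) (hb : 0 < b)
    (h : (a + b - 2) * (a + b) ^ 2 < 4 * a ^ 2 * b ^ 2) :
    √((a + b - 2) / (a * b)) < 2 * √(a * b) / (a + b) := by
  have hab : 0 < a * b := mul_pos ha hb
  rw [Real.sqrt_lt' (by positivity), div_pow, mul_pow, Real.sq_sqrt hab.le,
    div_lt_div_iff₀ hab (by positivity)]
  linarith

theorem sqrt_abc_lt_ga_of_natAbs_sub_le (a b : ℕ) (ha : 2 ≤ a) (hb : 2 ≤ b)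
    (h : ((a : ℤ) - (b : ℤ)).natAbs ≤ (2 * min a b - 1) ^ 2) :
    √(((a : ℝ) + b - 2) / ((a : ℝ) * b)) < 2 * √((a : ℝ) * b) / ((a : ℝ) + b) := by
  have hR : |(a : ℝ) - b| ≤ (2 * min (a : ℝ) b - 1) ^ 2 := by
    have h1 : 1 ≤ 2 * min a b := by omega
    have := (Nat.cast_le (α := ℝ)).2 h
    rwa [Nat.cast_natAbs, Int.cast_abs, Nat.cast_pow, Nat.cast_sub h1, Nat.cast_mul,
      Nat.cast_min, Int.cast_sub, Int.cast_natCast, Int.cast_natCast, Nat.cast_ofNat,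
      Nat.cast_one] at this
  have haR : (2 : ℝ) ≤ a := by exact_mod_cast ha
  have hbR : (2 : ℝ) ≤ b := by exact_mod_cast hb
  exact sqrt_abc_lt_ga_of_mul_lt a b (by linarith) (by linarith)
    (add_sub_two_mul_add_sq_lt a b haR hbR hR)

theorem minDeg_le_deg {V : Type*} [Finite V] (G : SimpleGraph V) (v : V) :
    minDeg G ≤ deg G v := by
  classical
  let _ := Fintype.ofFinite V
  exact G.minDegree_le_degree v

theorem exists_adj_of_deg_pos {V : Type*} [Finite V] {G : SimpleGraph V} {v : V}
    (hv : 0 < deg G v) : ∃ w, G.Adj v w := by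
  classical
  let _ := Fintype.ofFinite V
  exact (G.degree_pos_iff_exists_adj v).1 hv

theorem ABC_lt_GA_of_forall_adj {V : Type*} [Finite V] (G : SimpleGraph V) (hG : G ≠ ⊥)
    (hlt : ∀ u v, G.Adj u v →
      √(((deg G u : ℝ) + deg G v - 2) / ((deg G u : ℝ) * deg G v)) <
        2 * √((deg G u : ℝ) * deg G v) / ((deg G u : ℝ) + deg G v)) :
    ABC G < GA G := by
  classical
  let _ := Fintype.ofFinite V
  unfold ABC GA deg at *
  refine Finset.sum_lt_sum_of_nonempty (edgeFinset_nonempty.2 hG) fun e he => ?_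
  induction e using Sym2.ind with
  | _ u v => exact hlt u v (G.mem_edgeFinset.1 he)

/-- If `G` is a connected graph with minimum degree `δ ≥ 2` such that for
every edge `uv` of `G` one has `|dᵤ − dᵥ| ≤ (2k − 1)²` where `k = min(dᵤ, dᵥ)`, then
`GA(G) > ABC(G)`. -/
theorem stmt_8 {V : Type*} [Fintype V] (G : SimpleGraph V)
    (hconn : G.Connected) (hδ : 2 ≤ minDeg G)
    (h : ∀ u v : V, G.Adj u v →
      ((deg G u : ℤ) - (deg G v : ℤ)).natAbs ≤ (2 * min (deg G u) (deg G v) - 1)^2) :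
    ABC G < GA G := by
  have hdeg (v : V) : 2 ≤ deg G v := hδ.trans (minDeg_le_deg G v)
  obtain ⟨v⟩ := hconn.nonempty
  obtain ⟨w, hvw⟩ := exists_adj_of_deg_pos (zero_lt_two.trans_le (hdeg v))
  refine ABC_lt_GA_of_forall_adj G (ne_bot_iff_exists_adj.2 ⟨v, w, hvw⟩) fun u v huv => ?_
  exact sqrt_abc_lt_ga_of_natAbs_sub_le _ _ (hdeg u) (hdeg v) (h u v huv)
end

section
/- Let G be a connected simple graph on n vertices with minimum degree δ ≥ 2. Then (√(2(n−2))/(n−1))·GA(G) ≤ ABC(G) ≤ ((n+1)/(4√(n−1)))·GA(G), with equality on the left if and only if G is isomorphic to the complete graph K_n, and with equality on the right if and only if G is isomorphic to the cycle C_3. -/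
/-!
Both inequalities hold edge by edge. For an edge whose end degrees `x, y` lie in `[2, N]`
with `N = n - 1`, squaring turns `c · 2√(xy)/(x+y) ≤ √((x+y-2)/(xy))` into the polynomial
inequality `4c²(xy)² ≤ (x+y)²(x+y-2)`. For the lower constant this is tight only at
`x = y = N`, for the upper constant only at `{x, y} = {2, N}`. Equality of the sums forces
equality on every edge. In the lower case every vertex is then universal, so `G = Kₙ`. In the
upper case every edge joins a vertex of degree 2 to a universal vertex; if `N ≠ 2`, the two
neighbours of a vertex of degree 2 would be adjacent universal vertices, which is impossible,
so `n = 3` and `G = K₃ = C₃`.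
-/

open SimpleGraph

noncomputable def gaTerm (x y : ℝ) : ℝ := 2 * √(x * y) / (x + y)

noncomputable def abcTerm (x y : ℝ) : ℝ := √((x + y - 2) / (x * y))

theorem gaTerm_comm (x y : ℝ) : gaTerm x y = gaTerm y x := by
  rw [gaTerm, gaTerm, mul_comm x, add_comm x]

theorem abcTerm_comm (x y : ℝ) : abcTerm x y = abcTerm y x := by
  rw [abcTerm, abcTerm, mul_comm x, add_comm x]

section EdgeTerms

variable {c N x y : ℝ}

theorem mul_gaTerm_eq_sqrt (hc : 0 ≤ c) (hx : 0 ≤ x) (hy : 0 ≤ y) :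
    c * gaTerm x y = √(4 * c ^ 2 * (x * y) / (x + y) ^ 2) := by
  rw [show 4 * c ^ 2 * (x * y) / (x + y) ^ 2 = (2 * c / (x + y)) ^ 2 * (x * y) by
      rw [div_pow]; ring,
    Real.sqrt_mul (sq_nonneg _), Real.sqrt_sq (by positivity), gaTerm]
  ring

theorem mul_gaTerm_le_abcTerm_iff (hc : 0 ≤ c) (hx : 0 < x) (hy : 0 < y) (hxy : 2 ≤ x + y) :
    c * gaTerm x y ≤ abcTerm x y ↔ 4 * c ^ 2 * (x * y) ^ 2 ≤ (x + y) ^ 2 * (x + y - 2) := by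
  rw [mul_gaTerm_eq_sqrt hc hx.le hy.le, abcTerm,
    Real.sqrt_le_sqrt_iff (div_nonneg (by linarith) (by positivity)),
    div_le_div_iff₀ (by positivity) (by positivity)]
  constructor <;> intro h <;> linarith

theorem abcTerm_le_mul_gaTerm_iff (hc : 0 ≤ c) (hx : 0 < x) (hy : 0 < y) :
    abcTerm x y ≤ c * gaTerm x y ↔ (x + y) ^ 2 * (x + y - 2) ≤ 4 * c ^ 2 * (x * y) ^ 2 := by
  rw [mul_gaTerm_eq_sqrt hc hx.le hy.le, abcTerm, Real.sqrt_le_sqrt_iff (by positivity),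
    div_le_div_iff₀ (by positivity) (by positivity)]
  constructor <;> intro h <;> linarith

theorem mul_gaTerm_eq_abcTerm_iff (hc : 0 ≤ c) (hx : 0 < x) (hy : 0 < y) (hxy : 2 ≤ x + y) :
    c * gaTerm x y = abcTerm x y ↔ 4 * c ^ 2 * (x * y) ^ 2 = (x + y) ^ 2 * (x + y - 2) := by
  rw [le_antisymm_iff, le_antisymm_iff, mul_gaTerm_le_abcTerm_iff hc hx hy hxy,
    abcTerm_le_mul_gaTerm_iff hc hx hy]

-- The squared-out forms of the two per-edge inequalities, with their equality cases.

theorem lower_poly_le_and_eq (hx₂ : 2 ≤ x) (hxN : x ≤ N) (hy₂ : 2 ≤ y) (hyN : y ≤ N) :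
    8 * (N - 1) * (x * y) ^ 2 ≤ N ^ 2 * (x + y) ^ 2 * (x + y - 2) ∧
      (8 * (N - 1) * (x * y) ^ 2 = N ^ 2 * (x + y) ^ 2 * (x + y - 2) → x = N ∧ y = N) := by
  -- Both summands are nonnegative on `[2, N]²`, and the first one vanishes only at `x = y = N`.
  have key : N ^ 2 * (x + y) ^ 2 * (x + y - 2) - 8 * (N - 1) * (x * y) ^ 2 =
      (x + y) ^ 2 / 2 * (2 * N - (x + y)) * ((N - 1) * (x + y) - 2 * N)
        + (N - 1) / 2 * (x - y) ^ 2 * ((x + y) ^ 2 + 4 * (x * y)) := by ring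
  have hN : 0 ≤ N - 1 := by linarith
  have hs : 0 < x + y := by linarith
  have hN4 : 0 ≤ (N - 1) * (x + y - 4) := mul_nonneg hN (by linarith)
  have h₁ : 0 ≤ 2 * N - (x + y) := by linarith
  have h₂ : 0 ≤ (N - 1) * (x + y) - 2 * N := by linarith
  have hA : 0 ≤ (x + y) ^ 2 / 2 * (2 * N - (x + y)) * ((N - 1) * (x + y) - 2 * N) := by
    positivity
  have hB : 0 ≤ (N - 1) / 2 * (x - y) ^ 2 * ((x + y) ^ 2 + 4 * (x * y)) := by positivity
  refine ⟨by linarith, fun h => ?_⟩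
  have hA0 : (x + y) ^ 2 / 2 * (2 * N - (x + y)) * ((N - 1) * (x + y) - 2 * N) = 0 := by
    linarith
  rcases mul_eq_zero.1 hA0 with h | h
  · rcases mul_eq_zero.1 h with h | h
    · exact absurd h (by positivity)
    · constructor <;> linarith
  · have hN2 : N = 2 := by linarith
    subst hN2
    constructor <;> linarith

theorem upper_poly_le_and_eq_of_le (hx₂ : 2 ≤ x) (hxN : x ≤ N) (hy₂ : 2 ≤ y)
    (hyN : y ≤ N) (hs : x + y ≤ N + 2) :
    4 * N * (x + y) ^ 2 * (x + y - 2) ≤ (N + 2) ^ 2 * (x * y) ^ 2 ∧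
      (4 * N * (x + y) ^ 2 * (x + y - 2) = (N + 2) ^ 2 * (x * y) ^ 2 →
        x = 2 ∧ y = N ∨ x = N ∧ y = 2) := by
  -- Below the line `x + y = N + 2` the extremal edges are `x = 2` and `y = 2`.
  have key : (N + 2) ^ 2 * (x * y) ^ 2 - 4 * N * (x + y) ^ 2 * (x + y - 2) =
      (N + 2) ^ 2 * ((x - 2) * (y - 2)) * (x * y + 2 * (x + y - 2))
        + 4 * (x + y - 2) * (N + 2 - (x + y)) * (N * (x + y) - 2 * (N + 2)) := by ring
  have hN : N + 2 ≠ 0 := by linarith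
  have hx2y2 : 0 ≤ (x - 2) * (y - 2) := mul_nonneg (by linarith) (by linarith)
  have hNs : 0 ≤ N * (x + y - 4) := mul_nonneg (by linarith) (by linarith)
  have h₁ : 0 < x * y + 2 * (x + y - 2) := by linarith
  have h₂ : 0 < x + y - 2 := by linarith
  have h₃ : 0 ≤ N + 2 - (x + y) := by linarith
  have h₄ : 0 ≤ N * (x + y) - 2 * (N + 2) := by linarith
  have hA : 0 ≤ (N + 2) ^ 2 * ((x - 2) * (y - 2)) * (x * y + 2 * (x + y - 2)) := by positivity
  have hB : 0 ≤ 4 * (x + y - 2) * (N + 2 - (x + y)) * (N * (x + y) - 2 * (N + 2)) := by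
    positivity
  refine ⟨by linarith, fun h => ?_⟩
  have hA0 : (x - 2) * (y - 2) = 0 := by
    have : (N + 2) ^ 2 * ((x - 2) * (y - 2)) * (x * y + 2 * (x + y - 2)) = 0 := by linarith
    simpa [h₁.ne', hN] using this
  have hB0 : (N + 2 - (x + y)) * (N * (x + y) - 2 * (N + 2)) = 0 := by
    have : 4 * (x + y - 2) * (N + 2 - (x + y)) * (N * (x + y) - 2 * (N + 2)) = 0 := by
      linarith
    simpa [mul_assoc, h₂.ne'] using this
  rcases mul_eq_zero.1 hA0 with hx | hy <;> rcases mul_eq_zero.1 hB0 with hB' | hB'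
  · left; constructor <;> linarith
  · have hN2 : N = 2 := by linarith
    subst hN2
    left; constructor <;> linarith
  · right; constructor <;> linarith
  · have hN2 : N = 2 := by linarith
    subst hN2
    right; constructor <;> linarith

theorem upper_poly_le_and_eq_of_ge (hx₂ : 2 ≤ x) (hxN : x ≤ N) (hy₂ : 2 ≤ y)
    (hyN : y ≤ N) (hs : N + 2 ≤ x + y) :
    4 * N * (x + y) ^ 2 * (x + y - 2) ≤ (N + 2) ^ 2 * (x * y) ^ 2 ∧
      (4 * N * (x + y) ^ 2 * (x + y - 2) = (N + 2) ^ 2 * (x * y) ^ 2 →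
        x = 2 ∧ y = N ∨ x = N ∧ y = 2) := by
  -- Above the line `x + y = N + 2` the extremal edges are `x = N` and `y = N`. `Q` is the
  -- concave quadratic in `x + y` written as its linear interpolation between `N + 2` and `2N`
  -- plus the concavity term, so it is positive on `(N + 2, 2N]`.
  set Q := 4 * (N + 1) * (N + 2) * (2 * N - (x + y)) + N ^ 2 * (N + 8) * (x + y - (N + 2))
    + 4 * (x + y - (N + 2)) * (2 * N - (x + y)) with hQ
  have key : (N + 2) ^ 2 * (x * y) ^ 2 - 4 * N * (x + y) ^ 2 * (x + y - 2) =
      (N + 2) ^ 2 * ((N - x) * (N - y)) * (x * y + N * (x + y - N))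
        + N * (x + y - (N + 2)) * Q := by rw [hQ]; ring
  have hN : 0 < N := by linarith
  have hNx : 0 ≤ (N - x) * (N - y) := mul_nonneg (by linarith) (by linarith)
  have h₁ : 0 < x * y + N * (x + y - N) := by nlinarith
  have h₂ : 0 ≤ x + y - (N + 2) := by linarith
  have h₃ : 0 ≤ 2 * N - (x + y) := by linarith
  have hQ0 : 0 ≤ Q := by positivity
  have hA : 0 ≤ (N + 2) ^ 2 * ((N - x) * (N - y)) * (x * y + N * (x + y - N)) := by positivity
  have hB : 0 ≤ N * (x + y - (N + 2)) * Q := by positivity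
  refine ⟨by linarith, fun h => ?_⟩
  have hA0 : (N - x) * (N - y) = 0 := by
    have : (N + 2) ^ 2 * ((N - x) * (N - y)) * (x * y + N * (x + y - N)) = 0 := by linarith
    have hN2 : N + 2 ≠ 0 := by linarith
    simpa [h₁.ne', hN2] using this
  have hs : x + y = N + 2 := by
    by_contra hne
    have h₂' : 0 < x + y - (N + 2) := sub_pos.2 (lt_of_le_of_ne hs (Ne.symm hne))
    have : 0 < N * (x + y - (N + 2)) * Q := by positivity
    linarith
  rcases mul_eq_zero.1 hA0 with hx | hy
  · right; constructor <;> linarith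
  · left; constructor <;> linarith

theorem upper_poly_le_and_eq (hx₂ : 2 ≤ x) (hxN : x ≤ N) (hy₂ : 2 ≤ y) (hyN : y ≤ N) :
    4 * N * (x + y) ^ 2 * (x + y - 2) ≤ (N + 2) ^ 2 * (x * y) ^ 2 ∧
      (4 * N * (x + y) ^ 2 * (x + y - 2) = (N + 2) ^ 2 * (x * y) ^ 2 →
        x = 2 ∧ y = N ∨ x = N ∧ y = 2) :=
  (le_total (x + y) (N + 2)).elim (upper_poly_le_and_eq_of_le hx₂ hxN hy₂ hyN)
    (upper_poly_le_and_eq_of_ge hx₂ hxN hy₂ hyN)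

-- `√(2(N-1))/N` and `(N+2)/(4√N)` are the constants of the theorem with `N = n - 1`; the lemma
-- names call them `lower` and `upper`.

theorem four_mul_lower_sq (hN : 1 ≤ N) :
    4 * (√(2 * (N - 1)) / N) ^ 2 = 8 * (N - 1) / N ^ 2 := by
  rw [div_pow, Real.sq_sqrt (by linarith)]
  ring

theorem four_mul_upper_sq (hN : 0 ≤ N) :
    4 * ((N + 2) / (4 * √N)) ^ 2 = (N + 2) ^ 2 / (4 * N) := by
  rw [div_pow, mul_pow, Real.sq_sqrt hN]
  ring

theorem lower_mul_gaTerm_le_abcTerm (hx₂ : 2 ≤ x) (hxN : x ≤ N) (hy₂ : 2 ≤ y)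
    (hyN : y ≤ N) : √(2 * (N - 1)) / N * gaTerm x y ≤ abcTerm x y := by
  have hN : 0 < N := by linarith
  rw [mul_gaTerm_le_abcTerm_iff (by positivity) (by linarith) (by linarith) (by linarith),
    four_mul_lower_sq (by linarith), div_mul_eq_mul_div, div_le_iff₀ (by positivity)]
  linarith [(lower_poly_le_and_eq hx₂ hxN hy₂ hyN).1]

theorem lower_mul_gaTerm_eq_abcTerm_iff (hx₂ : 2 ≤ x) (hxN : x ≤ N) (hy₂ : 2 ≤ y)
    (hyN : y ≤ N) : √(2 * (N - 1)) / N * gaTerm x y = abcTerm x y ↔ x = N ∧ y = N := by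
  have hN : 0 < N := by linarith
  rw [mul_gaTerm_eq_abcTerm_iff (by positivity) (by linarith) (by linarith) (by linarith),
    four_mul_lower_sq (by linarith), div_mul_eq_mul_div, div_eq_iff (by positivity)]
  refine ⟨fun h => (lower_poly_le_and_eq hx₂ hxN hy₂ hyN).2 (by linarith), ?_⟩
  rintro ⟨rfl, rfl⟩
  ring

theorem abcTerm_le_upper_mul_gaTerm (hx₂ : 2 ≤ x) (hxN : x ≤ N) (hy₂ : 2 ≤ y)
    (hyN : y ≤ N) : abcTerm x y ≤ (N + 2) / (4 * √N) * gaTerm x y := by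
  have hN : 0 < N := by linarith
  rw [abcTerm_le_mul_gaTerm_iff (by positivity) (by linarith) (by linarith),
    four_mul_upper_sq hN.le, div_mul_eq_mul_div, le_div_iff₀ (by positivity)]
  linarith [(upper_poly_le_and_eq hx₂ hxN hy₂ hyN).1]

theorem abcTerm_eq_upper_mul_gaTerm_iff (hx₂ : 2 ≤ x) (hxN : x ≤ N) (hy₂ : 2 ≤ y)
    (hyN : y ≤ N) :
    abcTerm x y = (N + 2) / (4 * √N) * gaTerm x y ↔ x = 2 ∧ y = N ∨ x = N ∧ y = 2 := by
  have hN : 0 < N := by linarith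
  rw [eq_comm, mul_gaTerm_eq_abcTerm_iff (by positivity) (by linarith) (by linarith)
    (by linarith), four_mul_upper_sq hN.le, div_mul_eq_mul_div, div_eq_iff (by positivity)]
  refine ⟨fun h => (upper_poly_le_and_eq hx₂ hxN hy₂ hyN).2 (by linarith), ?_⟩
  rintro (⟨rfl, rfl⟩ | ⟨rfl, rfl⟩) <;> ring

end EdgeTerms

namespace SimpleGraph

variable {V : Type*} (G : SimpleGraph V)

theorem forall_mem_edgeFinset_iff [Fintype G.edgeSet] {P : Sym2 V → Prop} :
    (∀ e ∈ G.edgeFinset, P e) ↔ ∀ u v, G.Adj u v → P s(u, v) := by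
  simp [Sym2.forall]

theorem sum_edgeFinset_le_sum {M : Type*} [AddCommMonoid M] [PartialOrder M]
    [IsOrderedAddMonoid M] [Fintype G.edgeSet] {f g : Sym2 V → M}
    (h : ∀ u v, G.Adj u v → f s(u, v) ≤ g s(u, v)) :
    ∑ e ∈ G.edgeFinset, f e ≤ ∑ e ∈ G.edgeFinset, g e :=
  Finset.sum_le_sum (G.forall_mem_edgeFinset_iff.2 h)

theorem sum_edgeFinset_eq_sum_iff {M : Type*} [AddCommMonoid M] [PartialOrder M]
    [IsOrderedCancelAddMonoid M] [Fintype G.edgeSet] {f g : Sym2 V → M}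
    (h : ∀ u v, G.Adj u v → f s(u, v) ≤ g s(u, v)) :
    ∑ e ∈ G.edgeFinset, f e = ∑ e ∈ G.edgeFinset, g e ↔
      ∀ u v, G.Adj u v → f s(u, v) = g s(u, v) := by
  rw [Finset.sum_eq_sum_iff_of_le (G.forall_mem_edgeFinset_iff.2 h), forall_mem_edgeFinset_iff]

theorem eq_top_of_iso_top {W : Type*} (φ : G ≃g (⊤ : SimpleGraph W)) : G = ⊤ :=
  eq_top_iff_forall_ne_adj.2 fun _ _ huv => φ.map_adj_iff.1 (φ.injective.ne huv)

theorem nonempty_iso_top_iff : Nonempty (G ≃g (⊤ : SimpleGraph V)) ↔ G = ⊤ :=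
  ⟨fun ⟨φ⟩ => G.eq_top_of_iso_top φ, fun h => h ▸ ⟨Iso.refl⟩⟩

theorem nonempty_iso_cycleGraph_three_iff [Fintype V] :
    Nonempty (G ≃g cycleGraph 3) ↔ G = ⊤ ∧ Fintype.card V = 3 := by
  rw [cycleGraph_three_eq_top]
  constructor
  · rintro ⟨φ⟩
    exact ⟨G.eq_top_of_iso_top φ, by simpa using φ.card_eq⟩
  · rintro ⟨rfl, hcard⟩
    exact ⟨Iso.completeGraph (Fintype.equivFinOfCardEq hcard)⟩

theorem eq_top_iff_forall_adj_isUniversal (h : ∀ v, ∃ w, G.Adj v w) :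
    G = ⊤ ↔ ∀ u v, G.Adj u v → G.IsUniversal u ∧ G.IsUniversal v := by
  refine ⟨fun hG u v _ => hG ▸ ⟨IsUniversal.top, IsUniversal.top⟩, fun hG => ?_⟩
  refine eq_top_iff_forall_isUniversal.2 fun v => ?_
  obtain ⟨w, hvw⟩ := h v
  exact (hG v w hvw).1

variable [Fintype V] [DecidableRel G.Adj]

theorem nonempty_of_minDegree_pos (h : 0 < G.minDegree) : Nonempty V := by
  by_contra hV
  have : IsEmpty V := not_nonempty_iff.1 hV
  simp at h

theorem minDeg_eq_minDegree : minDeg G = G.minDegree := by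
  unfold minDeg
  congr!

theorem cast_degree_le_card_sub_one (v : V) : (G.degree v : ℝ) ≤ Fintype.card V - 1 := by
  have := G.degree_lt_card_verts v
  rw [le_sub_iff_add_le]
  exact_mod_cast this

theorem cast_degree_eq_card_sub_one_iff (v : V) :
    (G.degree v : ℝ) = Fintype.card V - 1 ↔ G.IsUniversal v := by
  rw [← degree_eq_card_sub_one, ← Nat.cast_pred (Fintype.card_pos_iff.2 ⟨v⟩), Nat.cast_inj]

theorem eq_top_and_card_eq_three_of_forall_adj [Nonempty V] (h2 : ∀ v, 2 ≤ G.degree v)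
    (h : ∀ u v, G.Adj u v →
      G.degree u = 2 ∧ G.IsUniversal v ∨ G.IsUniversal u ∧ G.degree v = 2) :
    G = ⊤ ∧ Fintype.card V = 3 := by
  classical
  have hnbr : ∀ v, ∃ w, G.Adj v w := fun v =>
    (G.degree_pos_iff_exists_adj v).1 (by linarith [h2 v])
  have huniv : ∀ v, G.IsUniversal v ↔ G.degree v = Fintype.card V - 1 :=
    fun v => (G.degree_eq_card_sub_one v).symm
  have hcard : Fintype.card V = 3 := by
    obtain ⟨v⟩ := ‹Nonempty V›
    obtain ⟨w, hvw⟩ := hnbr v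
    obtain ⟨z, hz⟩ : ∃ z, G.degree z = 2 := by
      rcases h v w hvw with ⟨hv, -⟩ | ⟨-, hw⟩
      exacts [⟨v, hv⟩, ⟨w, hw⟩]
    by_contra hne
    have hz' : ¬ G.IsUniversal z := by
      rw [huniv]; omega
    -- the two neighbours of a vertex of degree 2 would both be universal, hence adjacent
    obtain ⟨a, b, hab, hnb⟩ :=
      Finset.card_eq_two.1 ((G.card_neighborFinset_eq_degree z).trans hz)
    have hnbr_univ : ∀ u, G.Adj z u → G.IsUniversal u := fun u hzu =>
      ((h z u hzu).resolve_right fun h' => hz' h'.1).2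
    have ha := hnbr_univ a (by simp [← mem_neighborFinset, hnb])
    have hb := hnbr_univ b (by simp [← mem_neighborFinset, hnb])
    rcases h a b (ha hab) with ⟨ha2, -⟩ | ⟨-, hb2⟩
    · rw [huniv] at ha; omega
    · rw [huniv] at hb; omega
  refine ⟨(G.eq_top_iff_forall_adj_isUniversal hnbr).2 fun u v huv => ?_, hcard⟩
  have two_univ : ∀ x, G.degree x = 2 → G.IsUniversal x := fun x hx => by rw [huniv]; omega
  rcases h u v huv with ⟨hu, hv⟩ | ⟨hu, hv⟩
  exacts [⟨two_univ u hu, hv⟩, ⟨hu, two_univ v hv⟩]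

end SimpleGraph

section Indices

open SimpleGraph

variable {V : Type*} [Fintype V] (G : SimpleGraph V) [DecidableRel G.Adj]

noncomputable def gaEdge : Sym2 V → ℝ :=
  Sym2.lift ⟨fun u v => gaTerm (G.degree u) (G.degree v), fun _ _ => gaTerm_comm _ _⟩

noncomputable def abcEdge : Sym2 V → ℝ :=
  Sym2.lift ⟨fun u v => abcTerm (G.degree u) (G.degree v), fun _ _ => abcTerm_comm _ _⟩

theorem GA_eq_sum_gaEdge [Fintype G.edgeSet] : GA G = ∑ e ∈ G.edgeFinset, gaEdge G e := by
  unfold GA gaEdge gaTerm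
  refine Finset.sum_congr (by congr!) fun e _ => ?_
  induction e using Sym2.ind
  simp only [Sym2.lift_mk]
  congr!

theorem ABC_eq_sum_abcEdge [Fintype G.edgeSet] : ABC G = ∑ e ∈ G.edgeFinset, abcEdge G e := by
  unfold ABC abcEdge abcTerm
  refine Finset.sum_congr (by congr!) fun e _ => ?_
  induction e using Sym2.ind
  simp only [Sym2.lift_mk]
  congr!

variable {G}

theorem lower_mul_gaEdge_le_abcEdge (h2 : ∀ v, 2 ≤ G.degree v) (u v : V) :
    √(2 * ((Fintype.card V : ℝ) - 2)) / ((Fintype.card V : ℝ) - 1) * gaEdge G s(u, v) ≤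
      abcEdge G s(u, v) := by
  rw [show (Fintype.card V : ℝ) - 2 = Fintype.card V - 1 - 1 by ring]
  exact lower_mul_gaTerm_le_abcTerm (by exact_mod_cast h2 u) (G.cast_degree_le_card_sub_one u)
    (by exact_mod_cast h2 v) (G.cast_degree_le_card_sub_one v)

theorem lower_mul_gaEdge_eq_abcEdge_iff (h2 : ∀ v, 2 ≤ G.degree v) (u v : V) :
    √(2 * ((Fintype.card V : ℝ) - 2)) / ((Fintype.card V : ℝ) - 1) * gaEdge G s(u, v) =
      abcEdge G s(u, v) ↔ G.IsUniversal u ∧ G.IsUniversal v := by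
  rw [show (Fintype.card V : ℝ) - 2 = Fintype.card V - 1 - 1 by ring,
    ← cast_degree_eq_card_sub_one_iff, ← cast_degree_eq_card_sub_one_iff]
  exact lower_mul_gaTerm_eq_abcTerm_iff (by exact_mod_cast h2 u)
    (G.cast_degree_le_card_sub_one u) (by exact_mod_cast h2 v) (G.cast_degree_le_card_sub_one v)

theorem abcEdge_le_upper_mul_gaEdge (h2 : ∀ v, 2 ≤ G.degree v) (u v : V) :
    abcEdge G s(u, v) ≤
      ((Fintype.card V : ℝ) + 1) / (4 * √((Fintype.card V : ℝ) - 1)) * gaEdge G s(u, v) := by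
  rw [show (Fintype.card V : ℝ) + 1 = Fintype.card V - 1 + 2 by ring]
  exact abcTerm_le_upper_mul_gaTerm (by exact_mod_cast h2 u) (G.cast_degree_le_card_sub_one u)
    (by exact_mod_cast h2 v) (G.cast_degree_le_card_sub_one v)

theorem abcEdge_eq_upper_mul_gaEdge_iff (h2 : ∀ v, 2 ≤ G.degree v) (u v : V) :
    abcEdge G s(u, v) =
        ((Fintype.card V : ℝ) + 1) / (4 * √((Fintype.card V : ℝ) - 1)) * gaEdge G s(u, v) ↔
      G.degree u = 2 ∧ G.IsUniversal v ∨ G.IsUniversal u ∧ G.degree v = 2 := by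
  rw [show (Fintype.card V : ℝ) + 1 = Fintype.card V - 1 + 2 by ring,
    ← cast_degree_eq_card_sub_one_iff, ← cast_degree_eq_card_sub_one_iff,
    ← Nat.cast_inj (R := ℝ), ← Nat.cast_inj (R := ℝ) (m := G.degree v)]
  exact abcTerm_eq_upper_mul_gaTerm_iff (by exact_mod_cast h2 u)
    (G.cast_degree_le_card_sub_one u) (by exact_mod_cast h2 v) (G.cast_degree_le_card_sub_one v)

theorem lower_mul_GA_le_ABC (h2 : ∀ v, 2 ≤ G.degree v) :
    √(2 * ((Fintype.card V : ℝ) - 2)) / ((Fintype.card V : ℝ) - 1) * GA G ≤ ABC G := by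
  classical
  rw [GA_eq_sum_gaEdge, ABC_eq_sum_abcEdge, Finset.mul_sum]
  exact G.sum_edgeFinset_le_sum fun u v _ => lower_mul_gaEdge_le_abcEdge h2 u v

theorem lower_mul_GA_eq_ABC_iff (h2 : ∀ v, 2 ≤ G.degree v) :
    √(2 * ((Fintype.card V : ℝ) - 2)) / ((Fintype.card V : ℝ) - 1) * GA G = ABC G ↔
      G = ⊤ := by
  classical
  rw [GA_eq_sum_gaEdge, ABC_eq_sum_abcEdge, Finset.mul_sum,
    G.sum_edgeFinset_eq_sum_iff fun u v _ => lower_mul_gaEdge_le_abcEdge h2 u v,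
    G.eq_top_iff_forall_adj_isUniversal fun v =>
      (G.degree_pos_iff_exists_adj v).1 (by linarith [h2 v])]
  simp only [lower_mul_gaEdge_eq_abcEdge_iff h2]

theorem ABC_le_upper_mul_GA (h2 : ∀ v, 2 ≤ G.degree v) :
    ABC G ≤ ((Fintype.card V : ℝ) + 1) / (4 * √((Fintype.card V : ℝ) - 1)) * GA G := by
  classical
  rw [GA_eq_sum_gaEdge, ABC_eq_sum_abcEdge, Finset.mul_sum]
  exact G.sum_edgeFinset_le_sum fun u v _ => abcEdge_le_upper_mul_gaEdge h2 u v

theorem ABC_eq_upper_mul_GA_iff [Nonempty V] (h2 : ∀ v, 2 ≤ G.degree v) :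
    ABC G = ((Fintype.card V : ℝ) + 1) / (4 * √((Fintype.card V : ℝ) - 1)) * GA G ↔
      G = ⊤ ∧ Fintype.card V = 3 := by
  classical
  rw [GA_eq_sum_gaEdge, ABC_eq_sum_abcEdge, Finset.mul_sum,
    G.sum_edgeFinset_eq_sum_iff fun u v _ => abcEdge_le_upper_mul_gaEdge h2 u v]
  simp only [abcEdge_eq_upper_mul_gaEdge_iff h2]
  refine ⟨G.eq_top_and_card_eq_three_of_forall_adj h2, fun ⟨hG, hcard⟩ u v _ => Or.inl ?_⟩
  have huniv := eq_top_iff_forall_isUniversal.1 hG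
  exact ⟨by rw [(G.degree_eq_card_sub_one u).2 (huniv u), hcard], huniv v⟩

end Indices

theorem stmt_9_general {V : Type*} [Fintype V] (G : SimpleGraph V)
    (hδ : 2 ≤ minDeg G)
    (n : ℕ) (hn : n = Fintype.card V) :
    (Real.sqrt (2 * ((n : ℝ) - 2)) / ((n : ℝ) - 1)) * GA G ≤ ABC G ∧
    ABC G ≤ (((n : ℝ) + 1) / (4 * Real.sqrt ((n : ℝ) - 1))) * GA G ∧
    ((Real.sqrt (2 * ((n : ℝ) - 2)) / ((n : ℝ) - 1)) * GA G = ABC G ↔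
      Nonempty (G ≃g (⊤ : SimpleGraph V))) ∧
    (ABC G = (((n : ℝ) + 1) / (4 * Real.sqrt ((n : ℝ) - 1))) * GA G ↔
      Nonempty (G ≃g cycleGraph 3)) := by
  classical
  subst hn
  rw [minDeg_eq_minDegree] at hδ
  have h2 : ∀ v, 2 ≤ G.degree v := fun v => hδ.trans (G.minDegree_le_degree v)
  have : Nonempty V := G.nonempty_of_minDegree_pos (by omega)
  exact ⟨lower_mul_GA_le_ABC h2, ABC_le_upper_mul_GA h2,
    (lower_mul_GA_eq_ABC_iff h2).trans G.nonempty_iso_top_iff.symm,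
    (ABC_eq_upper_mul_GA_iff h2).trans G.nonempty_iso_cycleGraph_three_iff.symm⟩

/-- For a connected graph `G` on `n` vertices with minimum degree `δ ≥ 2`,
`(√(2(n−2))/(n−1))·GA(G) ≤ ABC(G) ≤ ((n+1)/(4√(n−1)))·GA(G)`, with equality on the left iff
`G ≅ Kₙ` and equality on the right iff `G ≅ C₃`. -/
theorem stmt_9 {V : Type*} [Fintype V] (G : SimpleGraph V)
    (hconn : G.Connected) (hδ : 2 ≤ minDeg G)
    (n : ℕ) (hn : n = Fintype.card V) :
    (Real.sqrt (2 * ((n : ℝ) - 2)) / ((n : ℝ) - 1)) * GA G ≤ ABC G ∧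
    ABC G ≤ (((n : ℝ) + 1) / (4 * Real.sqrt ((n : ℝ) - 1))) * GA G ∧
    ((Real.sqrt (2 * ((n : ℝ) - 2)) / ((n : ℝ) - 1)) * GA G = ABC G ↔
      Nonempty (G ≃g (⊤ : SimpleGraph V))) ∧
    (ABC G = (((n : ℝ) + 1) / (4 * Real.sqrt ((n : ℝ) - 1))) * GA G ↔
      Nonempty (G ≃g cycleGraph 3)) :=
  stmt_9_general G hδ n hn
end

section
/- Let S be a starlike tree, i.e., a tree with exactly one vertex v of degree greater than 2, and suppose every branch of S has length at least 4; equivalently, every leaf of S is at distance at least 4 from v. Then GA(S) > ABC(S). -/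
open SimpleGraph

/-!
Let `k = deg v`. Every vertex other than `v` has degree at most `2` and the neighbours of `v`
have degree `2`, so each of the `k` edges at `v` contributes `2√(2k)/(k+2) - √2/2 > -√2/2` to
`GA - ABC`, while every other edge joins vertices of degree `1` or `2` and contributes at least
`√2/6`. As all branches have length at least `4`, each of the distance layers `1, …, 4` around `v`
has at least `k` vertices, so there are at least `3k` edges away from `v`, whose total
contribution `≥ k√2/2` outweighs the deficit at `v`.
-/

open Finset

noncomputable def gaSubAbcWeight (m n : ℕ) : ℝ :=
  2 * √((m : ℝ) * n) / (m + n) - √(((m : ℝ) + n - 2) / (m * n))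

lemma gaSubAbcWeight_comm (m n : ℕ) : gaSubAbcWeight m n = gaSubAbcWeight n m := by
  simp only [gaSubAbcWeight, mul_comm (m : ℝ), add_comm (m : ℝ)]

lemma neg_sqrt_two_div_two_lt_gaSubAbcWeight {k : ℕ} (hk : k ≠ 0) :
    -(√2 / 2) < gaSubAbcWeight k 2 := by
  have hk' : (0 : ℝ) < k := by positivity
  have half : ((k : ℝ) + (2 : ℕ) - 2) / (k * (2 : ℕ)) = 2⁻¹ := by field_simp; push_cast; ring
  rw [gaSubAbcWeight, half, Real.sqrt_inv, ← Real.sqrt_div_self, sub_eq_add_neg]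
  exact lt_add_of_pos_left _ (by positivity)

lemma sqrt_two_div_six_le_gaSubAbcWeight {m n : ℕ} (hm : m = 1 ∨ m = 2) (hn : n = 1 ∨ n = 2) :
    √2 / 6 ≤ gaSubAbcWeight m n := by
  have h2 : √2 ^ 2 = 2 := Real.sq_sqrt zero_le_two
  have hinv : (√2)⁻¹ = √2 / 2 := by field_simp; exact h2.symm
  have h32 : √2 < 3 / 2 := by nlinarith [Real.sqrt_nonneg 2]
  rcases hm with rfl | rfl <;> rcases hn with rfl | rfl <;>
    norm_num [gaSubAbcWeight, hinv] <;> linarith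

namespace SimpleGraph

section Distance

variable {V : Type*} {G : SimpleGraph V} {r u : V}

lemma Connected.exists_adj_dist_add_one (hG : G.Connected) (hu : u ≠ r) :
    ∃ a, G.Adj u a ∧ G.dist r a + 1 = G.dist r u := by
  obtain ⟨p, hp⟩ := hG.exists_walk_length_eq_dist u r
  cases p with
  | nil => exact absurd rfl hu
  | @cons _ a _ hadj q =>
    have hq : G.dist r a ≤ q.length := dist_comm ▸ G.dist_le q
    have htri : G.dist r u ≤ G.dist r a + G.dist a u := hG.dist_triangle
    rw [dist_comm (u := a), dist_eq_one_iff_adj.mpr hadj] at htri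
    rw [Walk.length_cons, dist_comm] at hp
    exact ⟨a, hadj, by omega⟩

lemma IsTree.eq_of_adj_of_dist_add_one (hG : G.IsTree) {a b : V} (ha : G.Adj u a)
    (hb : G.Adj u b) (hda : G.dist r a + 1 = G.dist r u) (hdb : G.dist r b + 1 = G.dist r u) :
    a = b := by
  classical
  have geodesic_concat : ∀ x, G.Adj u x → G.dist r x + 1 = G.dist r u →
      ∃ q : G.Walk r u, q.IsPath ∧ q.penultimate = x := by
    intro x hx hdx
    obtain ⟨q, hq, hql⟩ := hG.connected.exists_path_of_dist r x
    have hu : u ∉ q.support := fun hu => by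
      have := G.dist_le (q.takeUntil u hu)
      have := q.length_takeUntil_le_length hu
      omega
    exact ⟨q.concat hx.symm, hq.concat hu hx.symm, q.penultimate_concat hx.symm⟩
  obtain ⟨p, hp, rfl⟩ := geodesic_concat a ha hda
  obtain ⟨q, hq, rfl⟩ := geodesic_concat b hb hdb
  rw [(hG.existsUnique_path r u).unique hp hq]

lemma IsTree.exists_adj_dist_eq_add_one (hG : G.IsTree) [Fintype (G.neighborSet u)]
    (hu : u ≠ r) (hdeg : 2 ≤ G.degree u) : ∃ b, G.Adj u b ∧ G.dist r b = G.dist r u + 1 := by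
  obtain ⟨a, ha, hda⟩ := hG.connected.exists_adj_dist_add_one hu
  obtain ⟨b, hb, hba⟩ := exists_mem_ne (s := G.neighborFinset u)
    (by rw [card_neighborFinset_eq_degree]; omega) a
  rw [mem_neighborFinset] at hb
  refine ⟨b, hb, (hG.dist_eq_dist_add_one_of_adj r hb).resolve_left fun h => ?_⟩
  exact hba (hG.eq_of_adj_of_dist_add_one hb ha h.symm hda)

variable [Fintype V] [DecidableRel G.Adj]

lemma IsTree.card_dist_eq_le_card_dist_eq_add_one (hG : G.IsTree) {j : ℕ} (hj : j ≠ 0)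
    (hdeg : ∀ u, G.dist r u = j → 2 ≤ G.degree u) :
    #{u | G.dist r u = j} ≤ #{u | G.dist r u = j + 1} := by
  have hchild : ∀ u, G.dist r u = j → ∃ b, G.Adj u b ∧ G.dist r b = j + 1 := by
    intro u hu
    have hur : u ≠ r := by rintro rfl; rw [dist_self] at hu; exact hj hu.symm
    simpa [hu] using hG.exists_adj_dist_eq_add_one hur (hdeg u hu)
  choose! child hadj hdist using hchild
  refine card_le_card_of_injOn child (fun u hu => by simpa using hdist u (by simpa using hu)) fun u₁ hu₁ u₂ hu₂ h => ?_
  simp only [coe_filter, mem_univ, true_and, Set.mem_ofPred_eq] at hu₁ hu₂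
  exact hG.eq_of_adj_of_dist_add_one (u := child u₁) (r := r) (hadj u₁ hu₁).symm
    (h ▸ (hadj u₂ hu₂).symm) (by rw [hdist u₁ hu₁, hu₁]) (by rw [h, hdist u₂ hu₂, hu₂])

lemma IsTree.mul_degree_add_one_le_card (hG : G.IsTree) (n : ℕ)
    (hdeg : ∀ u, G.dist r u ≠ 0 → G.dist r u < n → 2 ≤ G.degree u) :
    n * G.degree r + 1 ≤ Fintype.card V := by
  have hlayer : ∀ j, 1 ≤ j → j ≤ n → G.degree r ≤ #{u | G.dist r u = j} := by
    intro j hj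
    induction j, hj using Nat.le_induction with
    | base =>
      intro _
      rw [← card_neighborFinset_eq_degree]
      exact card_le_card fun u hu => by simpa using hu
    | succ j hj ih =>
      intro hjn
      exact (ih (by omega)).trans <|
        hG.card_dist_eq_le_card_dist_eq_add_one (by omega) fun u hu => hdeg u (by omega) (by omega)
  have hroot : 0 < #{u | G.dist r u = 0} := card_pos.mpr ⟨r, by simp⟩
  calc n * G.degree r + 1
      ≤ ∑ j ∈ range n, #{u | G.dist r u = j + 1} + #{u | G.dist r u = 0} := by
        have := sum_le_sum fun j (hj : j ∈ range n) => hlayer (j + 1) (by omega)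
          (mem_range.mp hj)
        simp only [sum_const, card_range, smul_eq_mul] at this
        omega
    _ = #{u | G.dist r u ∈ range (n + 1)} := by
        rw [← sum_range_succ' (fun j => #{u | G.dist r u = j}),
          sum_card_fiberwise_eq_card_filter]
    _ ≤ Fintype.card V := card_le_univ _

end Distance

section Indices

variable {V : Type*} (G : SimpleGraph V) [Fintype V] [DecidableRel G.Adj]

lemma deg_eq_degree (v : V) : deg G v = G.degree v := by
  unfold deg; congr!

noncomputable def gaSubAbcEdge : Sym2 V → ℝ :=
  Sym2.lift ⟨fun a b => gaSubAbcWeight (G.degree a) (G.degree b),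
    fun _ _ => gaSubAbcWeight_comm _ _⟩

lemma GA_sub_ABC : GA G - ABC G = ∑ e ∈ G.edgeFinset, G.gaSubAbcEdge e := by
  unfold GA ABC
  rw [← sum_sub_distrib]
  congr! 2 with e
  induction e using Sym2.ind
  simp only [gaSubAbcEdge, Sym2.lift_mk, gaSubAbcWeight]
  congr!

variable {G} {r : V}

lemma IsTree.ABC_lt_GA_of_four_mul_degree_lt_card (hG : G.IsTree) (hr : G.degree r ≠ 0)
    (hnbr : ∀ u, G.Adj r u → G.degree u = 2) (hdeg : ∀ u, u ≠ r → G.degree u ≤ 2)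
    (hcard : 4 * G.degree r < Fintype.card V) : ABC G < GA G := by
  classical
  have hinc_card : #{e ∈ G.edgeFinset | r ∈ e} = G.degree r := by
    rw [← incidenceFinset_eq_filter, card_incidenceFinset_eq_degree]
  have hinc : -(√2 / 2) * G.degree r < ∑ e ∈ G.edgeFinset with r ∈ e, G.gaSubAbcEdge e := by
    have hne : ({e ∈ G.edgeFinset | r ∈ e}).Nonempty := by
      rw [← card_pos, hinc_card]; omega
    calc -(√2 / 2) * G.degree r = ∑ e ∈ G.edgeFinset with r ∈ e, -(√2 / 2) := by
          rw [sum_const, hinc_card, nsmul_eq_mul, mul_comm]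
      _ < _ := sum_lt_sum_of_nonempty hne fun e he => by
          obtain ⟨he, hre⟩ := mem_filter.mp he
          obtain ⟨u, rfl⟩ := Sym2.mem_iff_exists.mp hre
          rw [mem_edgeFinset, mem_edgeSet] at he
          simpa [gaSubAbcEdge, hnbr u he] using neg_sqrt_two_div_two_lt_gaSubAbcWeight hr
  have hrest_card : 3 * G.degree r ≤ #{e ∈ G.edgeFinset | r ∉ e} := by
    have := card_filter_add_card_filter_not (s := G.edgeFinset) (fun e => r ∈ e)
    have := hG.card_edgeFinset
    omega
  have hone_two : ∀ x y, G.Adj x y → x ≠ r → G.degree x = 1 ∨ G.degree x = 2 := by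
    intro x y hxy hxr
    have := (G.degree_pos_iff_exists_adj x).mpr ⟨y, hxy⟩
    have := hdeg x hxr
    omega
  have hrest : √2 / 6 * (3 * G.degree r : ℕ) ≤
      ∑ e ∈ G.edgeFinset with r ∉ e, G.gaSubAbcEdge e := by
    calc √2 / 6 * (3 * G.degree r : ℕ) ≤ ∑ e ∈ G.edgeFinset with r ∉ e, √2 / 6 := by
          rw [sum_const, nsmul_eq_mul, mul_comm]
          gcongr
      _ ≤ _ := sum_le_sum fun e he => by
          obtain ⟨he, hre⟩ := mem_filter.mp he
          induction e using Sym2.ind with | _ a b => ?_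
          rw [mem_edgeFinset, mem_edgeSet] at he
          rw [Sym2.mem_iff, not_or] at hre
          exact sqrt_two_div_six_le_gaSubAbcWeight (hone_two a b he (Ne.symm hre.1))
            (hone_two b a he.symm (Ne.symm hre.2))
  rw [← sub_pos, GA_sub_ABC, ← sum_filter_add_sum_filter_not _ (r ∈ ·)]
  push_cast at hrest
  linarith

end Indices

end SimpleGraph

/-- Let `S` be a starlike tree (a tree with exactly one vertex `v` of
degree greater than `2`) in which every branch has length at least `4`, i.e. every leaf is
at distance at least `4` from `v`. Then `GA(S) > ABC(S)`. -/
theorem stmt_11 {V : Type*} [Fintype V] (S : SimpleGraph V)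
    (hS : S.IsTree) (v : V) (hv : 2 < deg S v)
    (huniq : ∀ u : V, 2 < deg S u → u = v)
    (hbranch : ∀ u : V, deg S u = 1 → 4 ≤ S.dist u v) :
    ABC S < GA S := by
  classical
  simp only [deg_eq_degree] at hv huniq hbranch
  have hdeg : ∀ u, u ≠ v → S.degree u ≤ 2 := fun u hu => by
    by_contra h
    exact hu (huniq u (by omega))
  have hinner : ∀ u, S.dist v u ≠ 0 → S.dist v u < 4 → 2 ≤ S.degree u := by
    intro u hu0 hu4
    have huv : u ≠ v := by rintro rfl; simp at hu0
    obtain ⟨a, ha, -⟩ := hS.connected.exists_adj_dist_add_one huv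
    have := (S.degree_pos_iff_exists_adj u).mpr ⟨a, ha⟩
    have : S.degree u ≠ 1 := fun h => by have := hbranch u h; rw [dist_comm] at this; omega
    omega
  have hnbr : ∀ u, S.Adj v u → S.degree u = 2 := fun u hu => by
    have hdist : S.dist v u = 1 := dist_eq_one_iff_adj.mpr hu
    have := hinner u (by omega) (by omega)
    have := hdeg u hu.ne'
    omega
  have hcard := hS.mul_degree_add_one_le_card 4 hinner
  exact hS.ABC_lt_GA_of_four_mul_degree_lt_card (by omega) hnbr hdeg (by omega)
end

section
/- Let S be a starlike tree with branching vertex v of degree k > 2 and branch lengths r_1,…,r_k. If r_i ≥ 2 for all i (equivalently, no leaf of S is adjacent to v) and the average branch length (r_1 + ⋯ + r_k)/k is at least 4, then GA(S) > ABC(S). -/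
/-!
Because every branch has length at least 2, every edge has an endpoint of degree 2, so every ABC
term equals `√(1/2)` and `ABC(S) = m √(1/2)` with `m = |E(S)| = |V(S)| - 1`. An edge away from
the centre `v` joins vertices of degree 1 or 2 that are not both leaves, so its GA term is at
least `2√2/3`, while the `k` edges at `v` have positive GA terms. Hence
`GA(S) > (m - k) · 2√2/3 ≥ m √(1/2)`, and the last inequality is exactly `m ≥ 4k`.
-/

open SimpleGraph

namespace SimpleGraph

variable {V : Type*} {G : SimpleGraph V}

theorem Connected.eq_or_eq_of_adj_of_degree_eq_one [∀ x, Fintype (G.neighborSet x)]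
    (hG : G.Connected) {u w : V} (huw : G.Adj u w) (hu : G.degree u = 1) (hw : G.degree w = 1)
    (x : V) : x = u ∨ x = w := by
  by_contra hx
  obtain ⟨⟨⟨a, b⟩, hab⟩, -, ha, hb⟩ :=
    (hG.preconnected u x).some.exists_boundary_dart {u, w} (by simp) (by simpa using hx)
  simp only [Set.mem_insert_iff, Set.mem_singleton_iff] at ha hb
  rcases ha with rfl | rfl
  · exact hb (.inr <| (degree_eq_one_iff_existsUnique_adj.mp hu).unique hab huw)
  · exact hb (.inl <| (degree_eq_one_iff_existsUnique_adj.mp hw).unique hab huw.symm)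

end SimpleGraph

section DegreeIndex

variable {V : Type*} [Fintype V] (G : SimpleGraph V) [DecidableRel G.Adj]

noncomputable def degreeIndex (f : ℕ → ℕ → ℝ) (hf : ∀ a b, f a b = f b a) : ℝ :=
  ∑ e ∈ G.edgeFinset, Sym2.lift ⟨fun u w => f (G.degree u) (G.degree w), fun _ _ => hf _ _⟩ e

noncomputable def gaWeight (a b : ℕ) : ℝ := 2 * √((a : ℝ) * b) / ((a : ℝ) + b)

noncomputable def abcWeight (a b : ℕ) : ℝ := √(((a : ℝ) + b - 2) / ((a : ℝ) * b))

lemma gaWeight_comm (a b : ℕ) : gaWeight a b = gaWeight b a := by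
  simp only [gaWeight, mul_comm (a : ℝ), add_comm (a : ℝ)]

lemma abcWeight_comm (a b : ℕ) : abcWeight a b = abcWeight b a := by
  simp only [abcWeight, mul_comm (a : ℝ), add_comm (a : ℝ)]

lemma GA_eq_degreeIndex : GA G = degreeIndex G gaWeight gaWeight_comm := by
  unfold GA degreeIndex gaWeight
  congr!

lemma ABC_eq_degreeIndex : ABC G = degreeIndex G abcWeight abcWeight_comm := by
  unfold ABC degreeIndex abcWeight
  congr!

end DegreeIndex

section DegreeIndexBounds

open Finset

variable {V : Type*} [Fintype V] {G : SimpleGraph V} [DecidableRel G.Adj]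
  {f : ℕ → ℕ → ℝ} {hf : ∀ a b, f a b = f b a}

lemma degreeIndex_eq_card_mul {c : ℝ}
    (h : ∀ u w, G.Adj u w → f (G.degree u) (G.degree w) = c) :
    degreeIndex G f hf = #G.edgeFinset * c := by
  rw [degreeIndex, ← nsmul_eq_mul, ← sum_const]
  refine sum_congr rfl fun e he => ?_
  induction e using Sym2.ind with
  | _ u w => exact h u w (mem_edgeFinset.mp he)

lemma card_sub_degree_mul_lt_degreeIndex [DecidableEq V] (v : V) (hv : 0 < G.degree v) {c : ℝ}
    (hpos : ∀ u w, G.Adj u w → 0 < f (G.degree u) (G.degree w))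
    (hc : ∀ u w, G.Adj u w → u ≠ v → w ≠ v → c ≤ f (G.degree u) (G.degree w)) :
    (#G.edgeFinset - G.degree v : ℝ) * c < degreeIndex G f hf := by
  set F : Sym2 V → ℝ := Sym2.lift ⟨fun u w => f (G.degree u) (G.degree w), fun _ _ => hf _ _⟩
  have hinc := G.incidenceFinset_subset v
  have hfar : ∀ e ∈ G.edgeFinset \ G.incidenceFinset v, c ≤ F e := by
    intro e he
    induction e using Sym2.ind with
    | _ u w =>
      obtain ⟨hE, hI⟩ := mem_sdiff.mp he
      have huw := mem_edgeFinset.mp hE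
      rw [mem_incidenceFinset] at hI
      refine hc u w huw ?_ ?_ <;> rintro rfl <;> exact hI ⟨huw, by simp⟩
  have hnear : 0 < ∑ e ∈ G.incidenceFinset v, F e := by
    refine sum_pos (fun e he => ?_) (card_pos.mp (by rwa [card_incidenceFinset_eq_degree]))
    induction e using Sym2.ind with
    | _ u w => exact hpos u w (mem_edgeFinset.mp (hinc he))
  have hfar_sum := card_nsmul_le_sum _ _ _ hfar
  rw [card_sdiff_of_subset hinc, card_incidenceFinset_eq_degree, nsmul_eq_mul,
    Nat.cast_sub (G.degree_le_card_edgeFinset v)] at hfar_sum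
  rw [degreeIndex, ← sum_sdiff hinc]
  linarith

end DegreeIndexBounds

lemma abcWeight_two_left {b : ℕ} (hb : b ≠ 0) : abcWeight 2 b = √(1 / 2) := by
  have hb' : (b : ℝ) ≠ 0 := Nat.cast_ne_zero.mpr hb
  rw [abcWeight]
  congr 1
  push_cast
  field_simp
  ring

lemma gaWeight_pos {a b : ℕ} (ha : 0 < a) (hb : 0 < b) : 0 < gaWeight a b := by
  unfold gaWeight
  positivity

lemma two_mul_sqrt_two_div_three_le_gaWeight {a b : ℕ} (ha : a ∈ Set.Icc 1 2)
    (hb : b ∈ Set.Icc 1 2) (h : a = 2 ∨ b = 2) : 2 * √2 / 3 ≤ gaWeight a b := by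
  obtain ⟨ha1, ha2⟩ := ha
  obtain ⟨hb1, hb2⟩ := hb
  have hs : √2 ^ 2 = 2 := Real.sq_sqrt zero_le_two
  interval_cases a <;> interval_cases b
  · omega
  · norm_num [gaWeight]
  · norm_num [gaWeight]
  · norm_num [gaWeight]
    nlinarith [Real.sqrt_nonneg 2]

lemma mul_sqrt_half_le_sub_mul {m k : ℝ} (h : 4 * k ≤ m) :
    m * √(1 / 2) ≤ (m - k) * (2 * √2 / 3) := by
  have hs : √2 ^ 2 = 2 := Real.sq_sqrt zero_le_two
  have hhalf : √(1 / 2) = √2 / 2 :=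
    (Real.sqrt_eq_iff_mul_self_eq_of_pos (by positivity)).mpr (by nlinarith)
  rw [hhalf]
  nlinarith [mul_nonneg (Real.sqrt_nonneg 2) (sub_nonneg.mpr h)]

section Starlike

variable {V : Type*} {S : SimpleGraph V} [∀ x, Fintype (S.neighborSet x)] {v : V}

lemma degree_le_two_of_ne (huniq : ∀ u, 2 < S.degree u → u = v) {u : V} (hu : u ≠ v) :
    S.degree u ≤ 2 :=
  not_lt.mp (mt (huniq u) hu)

lemma degree_eq_two_or_degree_eq_two (hS : S.Connected) (huniq : ∀ u, 2 < S.degree u → u = v)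
    (hr : ∀ u, S.Adj v u → S.degree u ≠ 1) {u w : V} (huw : S.Adj u w) :
    S.degree u = 2 ∨ S.degree w = 2 := by
  have hu := huw.degree_pos_left
  have hw := huw.degree_pos_right
  by_cases huv : u = v
  · subst huv
    have := degree_le_two_of_ne huniq huw.ne'
    have := hr w huw
    omega
  by_cases hwv : w = v
  · subst hwv
    have := degree_le_two_of_ne huniq huv
    have := hr u huw.symm
    omega
  have := degree_le_two_of_ne huniq huv
  have := degree_le_two_of_ne huniq hwv
  by_contra! h
  rcases hS.eq_or_eq_of_adj_of_degree_eq_one huw (by omega) (by omega) v with rfl | rfl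
  · exact huv rfl
  · exact hwv rfl

end Starlike

theorem stmt_12_general {V : Type*} [Fintype V] (S : SimpleGraph V)
    (hS : S.IsTree) (v : V)
    (huniq : ∀ u : V, 2 < deg S u → u = v)
    (hr : ∀ u : V, S.Adj v u → deg S u ≠ 1)
    (havg : (4 : ℝ) ≤ ((Fintype.card V : ℝ) - 1) / (deg S v : ℝ)) :
    ABC S < GA S := by
  classical
  simp only [deg_eq_degree] at huniq hr havg
  -- `x / 0 = 0` in `ℝ`, so `havg` rules out `deg S v = 0`.
  have hk : 0 < S.degree v := Nat.pos_of_ne_zero fun h => by norm_num [h] at havg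
  have hm : (S.edgeFinset.card : ℝ) = Fintype.card V - 1 := by
    rw [← hS.card_edgeFinset]
    push_cast
    ring
  have h4k : 4 * (S.degree v : ℝ) ≤ S.edgeFinset.card := by
    rwa [hm, ← le_div_iff₀ (by exact_mod_cast hk)]
  have htwo := fun u w (huw : S.Adj u w) =>
    degree_eq_two_or_degree_eq_two hS.connected huniq hr huw
  have hABC : ABC S = S.edgeFinset.card * √(1 / 2) := by
    refine (ABC_eq_degreeIndex S).trans (degreeIndex_eq_card_mul fun u w huw => ?_)
    rcases htwo u w huw with hu | hw
    · rw [hu, abcWeight_two_left huw.degree_pos_right.ne']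
    · rw [hw, abcWeight_comm, abcWeight_two_left huw.degree_pos_left.ne']
  rw [hABC, GA_eq_degreeIndex]
  refine (mul_sqrt_half_le_sub_mul h4k).trans_lt (card_sub_degree_mul_lt_degreeIndex v hk
    (fun u w huw => gaWeight_pos huw.degree_pos_left huw.degree_pos_right) fun u w huw hu hw => ?_)
  exact two_mul_sqrt_two_div_three_le_gaWeight
    ⟨huw.degree_pos_left, degree_le_two_of_ne huniq hu⟩
    ⟨huw.degree_pos_right, degree_le_two_of_ne huniq hw⟩ (htwo u w huw)

/-- Let `S` be a starlike tree with branching vertex `v` of degree `k > 2`.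
If every branch has length at least `2` (equivalently, no leaf of `S` is adjacent to `v`)
and the average branch length `(r₁ + ⋯ + r_k)/k = (|V(S)| − 1)/k` is at least `4`, then
`GA(S) > ABC(S)`. -/
theorem stmt_12 {V : Type*} [Fintype V] (S : SimpleGraph V)
    (hS : S.IsTree) (v : V) (hv : 2 < deg S v)
    (huniq : ∀ u : V, 2 < deg S u → u = v)
    (hr : ∀ u : V, S.Adj v u → deg S u ≠ 1)
    (havg : (4 : ℝ) ≤ ((Fintype.card V : ℝ) - 1) / (deg S v : ℝ)) :
    ABC S < GA S :=
  stmt_12_general S hS v huniq hr havg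
end

section
/- For the wheel graph W_n, GA(W_n) > ABC(W_n) for every integer n with 4 ≤ n ≤ 194; explicitly, 1 + 2√(3(n−1))/(n+2) > 2/3 + √(n/(3(n−1))) for 4 ≤ n ≤ 194. -/
open SimpleGraph

/-- The wheel graph on `m + 1` vertices: a hub vertex `none` joined to every vertex of the
cycle `C_m` on the rim vertices `some a`, `a : Fin m`. For `n ≥ 4`, the wheel `W_n` on `n`
vertices is `wheelGraph (n - 1)`. -/
def wheelGraph (m : ℕ) : SimpleGraph (Option (Fin m)) :=
  SimpleGraph.fromRel (fun u v =>
    u = none ∨ ∃ a b : Fin m, u = some a ∧ v = some b ∧ (cycleGraph m).Adj a b)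

/-!
In `W_n = wheelGraph m` with `m = n - 1`, the hub has degree `m` and every rim vertex degree `3`;
there are `m` spokes and `m` rim edges, so `GA(W_n) = m (1 + 2√(3m)/(m+3))` and
`ABC(W_n) = m (2/3 + √((m+1)/(3m)))`. Isolating the square roots and squaring twice turns the
comparison of the two brackets into `E² < 432 m³ (m+3)²` with `E = (2m+3)(m+3)² - 108m²`
(needed only for `m > 8`, below which `E < 0`); this polynomial inequality holds up to
`m = 193` and fails at `m = 194`.
-/

open Finset

lemma SimpleGraph.sum_edgeFinset_eq_of_incident {V : Type*} [DecidableEq V] (G : SimpleGraph V)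
    [Fintype G.edgeSet] (v : V) [Fintype (G.neighborSet v)] {F : Sym2 V → ℝ} {c₁ c₂ : ℝ}
    (h₁ : ∀ e ∈ G.edgeFinset, v ∈ e → F e = c₁) (h₂ : ∀ e ∈ G.edgeFinset, v ∉ e → F e = c₂) :
    ∑ e ∈ G.edgeFinset, F e =
      G.degree v * c₁ + ((#G.edgeFinset - G.degree v : ℕ) : ℝ) * c₂ := by
  have hcard : #{e ∈ G.edgeFinset | v ∈ e} = G.degree v := by
    rw [← incidenceFinset_eq_filter, card_incidenceFinset_eq_degree]
  have hcard' : #{e ∈ G.edgeFinset | v ∉ e} = #G.edgeFinset - G.degree v := by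
    rw [← hcard, ← card_filter_add_card_filter_not (s := G.edgeFinset) (v ∈ ·),
      Nat.add_sub_cancel_left]
  rw [← sum_filter_add_sum_filter_not _ (v ∈ ·),
    sum_congr rfl fun e he => h₁ e (mem_filter.1 he).1 (mem_filter.1 he).2,
    sum_congr rfl fun e he => h₂ e (mem_filter.1 he).1 (mem_filter.1 he).2,
    sum_const, sum_const, hcard, hcard', nsmul_eq_mul, nsmul_eq_mul]

section Wheel

variable {m : ℕ}

@[simp] lemma wheelGraph_adj_none_some (a : Fin m) : (wheelGraph m).Adj none (some a) := by
  simp [wheelGraph]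

@[simp] lemma wheelGraph_adj_some_some {a b : Fin m} :
    (wheelGraph m).Adj (some a) (some b) ↔ (cycleGraph m).Adj a b := by
  simpa [wheelGraph, (cycleGraph m).adj_comm b a] using SimpleGraph.Adj.ne

lemma wheelGraph_degree_none [Fintype ((wheelGraph m).neighborSet none)] :
    (wheelGraph m).degree none = m := by
  have : (wheelGraph m).neighborFinset none = univ.map .some := by
    ext (_ | b) <;> simp
  simp [← card_neighborFinset_eq_degree, this]

lemma wheelGraph_degree_some (a : Fin m) [Fintype ((wheelGraph m).neighborSet (some a))] :
    (wheelGraph m).degree (some a) = (cycleGraph m).degree a + 1 := by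
  have : (wheelGraph m).neighborFinset (some a) =
      insert none (((cycleGraph m).neighborFinset a).map .some) := by
    ext (_ | b) <;> simp [(wheelGraph m).adj_comm _ none]
  simp [← card_neighborFinset_eq_degree, this]

lemma wheelGraph_degree_some_of_three_le (hm : 3 ≤ m) (a : Fin m)
    [Fintype ((wheelGraph m).neighborSet (some a))] : (wheelGraph m).degree (some a) = 3 := by
  obtain ⟨k, rfl⟩ := Nat.exists_eq_add_of_le' hm
  rw [wheelGraph_degree_some, cycleGraph_degree_three_le]

lemma wheelGraph_card_edgeFinset (hm : 3 ≤ m) [Fintype (wheelGraph m).edgeSet] :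
    #(wheelGraph m).edgeFinset = 2 * m := by
  classical
  obtain rfl : ‹Fintype (wheelGraph m).edgeSet› = (wheelGraph m).fintypeEdgeSet :=
    Subsingleton.elim _ _
  have h := (wheelGraph m).sum_degrees_eq_twice_card_edges
  simp only [Fintype.sum_option, wheelGraph_degree_none, wheelGraph_degree_some_of_three_le hm,
    sum_const, card_univ, Fintype.card_fin, smul_eq_mul] at h
  omega

lemma wheelGraph_sum_edgeFinset (hm : 3 ≤ m) [Fintype (wheelGraph m).edgeSet]
    {F : Sym2 (Option (Fin m)) → ℝ} {c₁ c₂ : ℝ} (h₁ : ∀ a, F s(none, some a) = c₁)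
    (h₂ : ∀ a b, (cycleGraph m).Adj a b → F s(some a, some b) = c₂) :
    ∑ e ∈ (wheelGraph m).edgeFinset, F e = m * c₁ + m * c₂ := by
  classical
  rw [(wheelGraph m).sum_edgeFinset_eq_of_incident none, wheelGraph_card_edgeFinset hm,
    wheelGraph_degree_none, show 2 * m - m = m by omega]
  · intro e he hnone
    induction e using Sym2.ind with | h u v => ?_
    rw [mem_edgeFinset, mem_edgeSet] at he
    rcases u with _ | a <;> rcases v with _ | b
    · exact absurd he (wheelGraph m).irrefl
    · exact h₁ b
    · rw [Sym2.eq_swap]; exact h₁ a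
    · simp at hnone
  · intro e he hnone
    induction e using Sym2.ind with | h u v => ?_
    rw [mem_edgeFinset, mem_edgeSet] at he
    rcases u with _ | a <;> rcases v with _ | b <;> simp only [Sym2.mem_iff, true_or, or_true,
      not_true_eq_false] at hnone
    exact h₂ a b (wheelGraph_adj_some_some.1 he)

lemma GA_wheelGraph (hm : 3 ≤ m) :
    GA (wheelGraph m) = m * (1 + 2 * √(3 * m) / (m + 3)) := by
  rw [mul_add, add_comm]
  unfold GA
  -- `?_` lets unification supply the edge-set instance built into `GA`.
  refine @wheelGraph_sum_edgeFinset m hm ?_ _ _ _ (fun a => ?_) (fun a b _ => ?_)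
  · simp only [Sym2.lift_mk, wheelGraph_degree_none, wheelGraph_degree_some_of_three_le hm]
    push_cast
    ring_nf
  · norm_num [wheelGraph_degree_some_of_three_le hm]

lemma ABC_wheelGraph (hm : 3 ≤ m) :
    ABC (wheelGraph m) = m * (2 / 3 + √((m + 1) / (3 * m))) := by
  rw [mul_add, add_comm]
  unfold ABC
  refine @wheelGraph_sum_edgeFinset m hm ?_ _ _ _ (fun a => ?_) (fun a b _ => ?_)
  · simp only [Sym2.lift_mk, wheelGraph_degree_none, wheelGraph_degree_some_of_three_le hm]
    push_cast
    ring_nf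
  · norm_num [wheelGraph_degree_some_of_three_le hm]

end Wheel

lemma sq_cubic_lt_of_le_193 {m : ℝ} (h8 : 8 ≤ m) (h193 : m ≤ 193) :
    ((2 * m + 3) * (m + 3) ^ 2 - 108 * m ^ 2) ^ 2 < 432 * m ^ 3 * (m + 3) ^ 2 := by
  -- The two sides differ by `m³ C + R` with `C`, `R` the expressions below; `C` is negative
  -- at `m = 194`, which is where the range of the theorem ends.
  have hC : 0 < (193 - m) * (4 * m ^ 2 - 32 * m + 25) + 5651 := by
    have : 0 ≤ 4 * m ^ 2 - 32 * m + 25 := by nlinarith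
    nlinarith
  have hR : 0 < 3726 * m ^ 2 - 1944 * m - 729 := by nlinarith
  linear_combination mul_pos (by positivity : 0 < m ^ 3) hC + hR

lemma cubic_lt_sqrt_mul_of_le_193 {m : ℝ} (h3 : 3 ≤ m) (h193 : m ≤ 193) :
    (2 * m + 3) * (m + 3) ^ 2 - 108 * m ^ 2 < 12 * √(3 * m) * m * (m + 3) := by
  have hs : √(3 * m) ^ 2 = 3 * m := Real.sq_sqrt (by linarith)
  have hpos : 0 < 12 * √(3 * m) * m * (m + 3) := by
    have : 0 < √(3 * m) := Real.sqrt_pos.2 (by linarith)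
    positivity
  rcases le_or_gt m 8 with h8 | h8
  · nlinarith
  · refine lt_of_pow_lt_pow_left₀ 2 hpos.le ?_
    calc _ < 432 * m ^ 3 * (m + 3) ^ 2 := sq_cubic_lt_of_le_193 h8.le h193
      _ = (12 * √(3 * m) * m * (m + 3)) ^ 2 := by rw [mul_pow, mul_pow, mul_pow, hs]; ring

lemma two_div_three_add_sqrt_lt_of_le_193 {m : ℝ} (h3 : 3 ≤ m) (h193 : m ≤ 193) :
    2 / 3 + √((m + 1) / (3 * m)) < 1 + 2 * √(3 * m) / (m + 3) := by
  have hs : √(3 * m) ^ 2 = 3 * m := Real.sq_sqrt (by linarith)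
  have hsplit : 1 + 2 * √(3 * m) / (m + 3) = 2 / 3 + (m + 3 + 6 * √(3 * m)) / (3 * (m + 3)) := by
    field_simp
    ring
  rw [hsplit, add_lt_add_iff_left, Real.sqrt_lt' (by positivity), div_pow,
    div_lt_div_iff₀ (by positivity) (by positivity)]
  linear_combination 3 * cubic_lt_sqrt_mul_of_le_193 h3 h193 - 108 * m * hs

/-- For every integer `4 ≤ n ≤ 194`, the wheel graph `W_n` satisfies
`GA(W_n) > ABC(W_n)`; explicitly, `1 + 2√(3(n−1))/(n+2) > 2/3 + √(n/(3(n−1)))`. -/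
theorem stmt_16 (n : ℕ) (hn : 4 ≤ n) (hn' : n ≤ 194) :
    ABC (wheelGraph (n - 1)) < GA (wheelGraph (n - 1)) ∧
    (2 : ℝ)/3 + Real.sqrt ((n : ℝ) / (3 * ((n : ℝ) - 1))) <
      1 + 2 * Real.sqrt (3 * ((n : ℝ) - 1)) / ((n : ℝ) + 2) := by
  have hm : 3 ≤ n - 1 := by omega
  have hcast : ((n - 1 : ℕ) : ℝ) = n - 1 := by
    rw [Nat.cast_sub (by omega), Nat.cast_one]
  have key := two_div_three_add_sqrt_lt_of_le_193 (m := ((n - 1 : ℕ) : ℝ))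
    (by exact_mod_cast hm) (by exact_mod_cast (by omega : n - 1 ≤ 193))
  constructor
  · rw [ABC_wheelGraph hm, GA_wheelGraph hm]
    exact mul_lt_mul_of_pos_left key (by positivity)
  · rw [hcast] at key
    convert key using 3 <;> ring
end
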